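/- arXiv:2503.17892 — 6 statements merged into one kernel-verified Lean document; each statement's English description precedes it below -/
import Mathlib

section
/- For every nonempty closed subset F of the space ℙ^ℕ ∪ ℚ^ℕ there exists a continuous function f : ℙ^ℕ ∪ ℚ^ℕ → I such that f(ℙ^ℕ \ F) ⊆ ℙ, f(ℚ^ℕ) ⊆ ℚ, and F = f⁻¹(0). -/
open Topology TopologicalSpace Set

noncomputable section

/-- The Hilbert cube `I^ℕ`. -/
abbrev HilbertCube : Type := ℕ → unitInterval

/-- `ℙ^ℕ`, the points of the Hilbert cube all of whose coordinates are irrational. -/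
def Pseq : Set HilbertCube := {x | ∀ n, Irrational (x n : ℝ)}

/-- `ℚ^ℕ`, the points of the Hilbert cube all of whose coordinates are rational. -/
def Qseq : Set HilbertCube := {x | ∀ n, ∃ q : ℚ, (x n : ℝ) = (q : ℝ)}

/-- `(ℙ ∪ {0})^ℕ`. -/
def P0seq : Set HilbertCube := {x | ∀ n, Irrational (x n : ℝ) ∨ (x n : ℝ) = 0}

/-- `H = {x ∈ I^ℕ : ∀ k ∃ l, x (2^k 3^l) = 0}`. -/
def Hset : Set HilbertCube := {x | ∀ k : ℕ, ∃ l : ℕ, (x (2 ^ k * 3 ^ l) : ℝ) = 0}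

/-- A topological space is zero-dimensional if it has a base consisting of clopen sets. -/
def ZeroDimSpace (Y : Type*) [TopologicalSpace Y] : Prop :=
  ∃ B : Set (Set Y), IsTopologicalBasis B ∧ ∀ U ∈ B, IsClopen U

/-- A subset is zero-dimensional if it is zero-dimensional in the subspace topology. -/
def ZeroDimSet {X : Type*} [TopologicalSpace X] (E : Set X) : Prop :=
  ZeroDimSpace E

/-- An `Fσδ` set: a countable intersection of countable unions of closed sets. -/
def IsFσδ {X : Type*} [TopologicalSpace X] (A : Set X) : Prop :=
  ∃ F : ℕ → ℕ → Set X, (∀ k l, IsClosed (F k l)) ∧ A = ⋂ k, ⋃ l, F k l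

/-- Absolutely `Fσδ`: some (equivalently, any) embedding into a completely metrizable
space — here the Hilbert cube — has an `Fσδ` image. -/
def AbsolutelyFσδ (Y : Type*) [TopologicalSpace Y] : Prop :=
  ∃ e : Y → HilbertCube, IsEmbedding e ∧ IsFσδ (Set.range e)

/-- `dim X ≤ 1` (small inductive dimension): every point has arbitrarily small open
neighbourhoods whose boundaries are empty or zero-dimensional. -/
def DimLeOne (X : Type*) [TopologicalSpace X] : Prop :=
  ∀ (x : X) (U : Set X), IsOpen U → x ∈ U →
    ∃ V : Set X, IsOpen V ∧ x ∈ V ∧ V ⊆ U ∧ (frontier V = ∅ ∨ ZeroDimSet (frontier V))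

/-! A supremum `f = ⨆ n, w n * b n` of bumps `0 ≤ b n ≤ 1` with rational weights `w n → 0` is
continuous, vanishes exactly where all the `b n` do, and is attained wherever it is positive, so
each value of `f` is `0` or a rational multiple of a value of some `b n`. For the `b n` take the
functions `max 0 (min over (i, a, b) of min (x i - a) (b - x i))` of the rational boxes of `I^ℕ`
missing `F`: they separate `F` from every point outside it, and since a finite minimum is one of its
terms, their values are irrational or `0` on `ℙ^ℕ` and rational on `ℚ^ℕ`. -/

open Filter

section WeightedSupremum

variable {X : Type*} [TopologicalSpace X]

theorem exists_eq_ciSup_of_tendsto_zero {a : ℕ → ℝ} (ha : Tendsto a atTop (𝓝 0))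
    (hpos : 0 < ⨆ n, a n) : ∃ m, a m = ⨆ n, a n := by
  set s := ⨆ n, a n
  have hlarge : {n | s / 2 < a n}.Finite := by
    have h : ∀ᶠ n in atTop, a n ≤ s / 2 := ha.eventually (ge_mem_nhds (half_pos hpos))
    rw [← Nat.cofinite_eq_atTop, eventually_cofinite] at h
    simpa only [not_le] using h
  obtain ⟨n₀, hn₀⟩ := exists_lt_of_lt_ciSup (half_lt_self hpos)
  obtain ⟨m, hm, hmax⟩ := Set.exists_max_image _ a hlarge ⟨n₀, hn₀⟩
  refine ⟨m, le_antisymm (le_ciSup ha.bddAbove_range m) (ciSup_le fun n => ?_)⟩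
  by_cases hn : s / 2 < a n
  · exact hmax n hn
  · exact (not_lt.mp hn).trans hm.le

theorem continuous_ciSup_of_le_of_tendsto_zero {g : ℕ → X → ℝ} {ε : ℕ → ℝ}
    (hg : ∀ n, Continuous (g n)) (hg0 : ∀ n x, 0 ≤ g n x) (hgε : ∀ n x, g n x ≤ ε n)
    (hε : Antitone ε) (hε0 : Tendsto ε atTop (𝓝 0)) :
    Continuous fun x => ⨆ n, g n x := by
  let P : ℕ → X → ℝ := fun N x =>
    (Finset.range (N + 1)).sup' Finset.nonempty_range_add_one fun n => g n x
  have hbdd : ∀ x, BddAbove (range fun n => g n x) := fun x =>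
    ⟨ε 0, by rintro _ ⟨n, rfl⟩; exact (hgε n x).trans (hε n.zero_le)⟩
  have hP_le : ∀ N x, P N x ≤ ⨆ n, g n x := fun N x =>
    Finset.sup'_le _ _ fun n _ => le_ciSup (hbdd x) n
  have hle_P : ∀ N x, ⨆ n, g n x ≤ P N x + ε (N + 1) := by
    intro N x
    refine ciSup_le fun n => ?_
    rcases le_or_gt n N with hn | hn
    · have hnP := Finset.le_sup' (fun n => g n x) (Finset.mem_range_succ_iff.mpr hn)
      linarith [hε.le_of_tendsto hε0 (N + 1)]
    · have h0P := Finset.le_sup' (fun n => g n x) (Finset.mem_range_succ_iff.mpr N.zero_le)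
      linarith [hgε n x, hε (Nat.succ_le_of_lt hn), hg0 0 x]
  have hP : ∀ N, Continuous (P N) := fun N => Continuous.finset_sup'_apply _ fun n _ => hg n
  refine TendstoUniformly.continuous (F := P) ?_ (Eventually.of_forall (f := atTop) hP).frequently
  rw [Metric.tendstoUniformly_iff]
  intro δ hδ
  filter_upwards [(hε0.comp (tendsto_add_atTop_nat 1)).eventually (gt_mem_nhds hδ)]
    with N hN x
  rw [Real.dist_eq, abs_of_nonneg (sub_nonneg.mpr (hP_le N x))]
  linarith [hle_P N x, show ε (N + 1) < δ from hN]

theorem exists_continuous_unitInterval_eq_ciSup {g : ℕ → X → ℝ} (hg : ∀ n, Continuous (g n))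
    (hg0 : ∀ n x, 0 ≤ g n x) (hg1 : ∀ n x, g n x ≤ (1 / 2) ^ n) :
    ∃ f : X → unitInterval, Continuous f ∧ ∀ x, (f x : ℝ) = ⨆ n, g n x := by
  have hε : Antitone fun n : ℕ => (1 / 2 : ℝ) ^ n :=
    fun m n hmn => pow_le_pow_of_le_one (by norm_num) (by norm_num) hmn
  have hsup0 : ∀ x, 0 ≤ ⨆ n, g n x := fun x => Real.iSup_nonneg (hg0 · x)
  have hsup1 : ∀ x, ⨆ n, g n x ≤ 1 := fun x =>
    ciSup_le fun n => (hg1 n x).trans (pow_le_one₀ (by norm_num) (by norm_num))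
  refine ⟨fun x => ⟨⨆ n, g n x, hsup0 x, hsup1 x⟩, ?_, fun x => rfl⟩
  exact (continuous_ciSup_of_le_of_tendsto_zero hg hg0 hg1 hε
    (tendsto_pow_atTop_nhds_zero_of_lt_one (by norm_num) (by norm_num))).subtype_mk _

theorem exists_continuous_unitInterval_preimage_zero_eq {ι : Type*} [Countable ι] [Nonempty ι]
    (b : ι → X → ℝ) (hb : ∀ i, Continuous (b i)) (hb0 : ∀ i x, 0 ≤ b i x)
    (hb1 : ∀ i x, b i x ≤ 1) (F : Set X)
    (hsep : ∀ x ∉ F, ∃ i, (∀ y ∈ F, b i y = 0) ∧ 0 < b i x) :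
    ∃ f : X → unitInterval, Continuous f ∧ f ⁻¹' {0} = F ∧
      ∀ x, (f x : ℝ) = 0 ∨ ∃ i, ∃ q : ℚ, q ≠ 0 ∧ (f x : ℝ) = q * b i x := by
  classical
  obtain ⟨e, he⟩ := exists_surjective_nat ι
  let w : ℕ → ℚ := fun n => if ∀ y ∈ F, b (e n) y = 0 then (1 / 2) ^ n else 0
  let g : ℕ → X → ℝ := fun n x => w n * b (e n) x
  have hw : ∀ n, 0 ≤ (w n : ℝ) ∧ (w n : ℝ) ≤ (1 / 2) ^ n := fun n => by
    unfold w; split_ifs <;> norm_num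
  have hg0 : ∀ n x, 0 ≤ g n x := fun n x => mul_nonneg (hw n).1 (hb0 _ x)
  have hg1 : ∀ n x, g n x ≤ (1 / 2) ^ n := fun n x =>
    (mul_le_of_le_one_right (hw n).1 (hb1 _ x)).trans (hw n).2
  have hg_tendsto : ∀ x, Tendsto (fun n => g n x) atTop (𝓝 0) := fun x =>
    tendsto_of_tendsto_of_tendsto_of_le_of_le tendsto_const_nhds
      (tendsto_pow_atTop_nhds_zero_of_lt_one (by norm_num) (by norm_num)) (hg0 · x) (hg1 · x)
  obtain ⟨f, hf, hfg⟩ := exists_continuous_unitInterval_eq_ciSup (g := g)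
    (fun n => continuous_const.mul (hb _)) hg0 hg1
  refine ⟨f, hf, ?_, fun x => ?_⟩
  · ext x
    simp only [mem_preimage, mem_singleton_iff, ← Subtype.coe_inj, Icc.coe_zero, hfg]
    refine ⟨fun h => by_contra fun hx => ?_, fun hx => ?_⟩
    · obtain ⟨i, hiF, hix⟩ := hsep x hx
      obtain ⟨n, rfl⟩ := he i
      have hgn : 0 < g n x := mul_pos (by simp only [w, if_pos hiF]; positivity) hix
      exact hgn.not_ge (h ▸ le_ciSup (hg_tendsto x).bddAbove_range n)
    · have hgx : ∀ n, g n x = 0 := fun n => by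
        unfold g w
        split_ifs with hn
        · simp [hn x hx]
        · simp
      simp [hgx]
  · rcases (f x).2.1.eq_or_lt with h | h
    · exact Or.inl h.symm
    rw [hfg] at h ⊢
    obtain ⟨n, hn⟩ := exists_eq_ciSup_of_tendsto_zero (hg_tendsto x) h
    by_cases hw0 : w n = 0
    · exact Or.inl (by simp [← hn, g, hw0])
    · exact Or.inr ⟨e n, w n, hw0, hn.symm⟩

end WeightedSupremum

def slabDepth (c : ℕ × ℚ × ℚ) (x : HilbertCube) : ℝ :=
  min ((x c.1 : ℝ) - c.2.1) (c.2.2 - x c.1)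

/-- The constraint `(0, -1/2, 3/2)` holds on all of `I^ℕ`; adding it makes the infimum nonempty
and at most `1`. -/
def ratBoxBump (S : Finset (ℕ × ℚ × ℚ)) (x : HilbertCube) : ℝ :=
  max 0 ((insert (0, -1 / 2, 3 / 2) S).inf' (Finset.insert_nonempty _ _) fun c => slabDepth c x)

theorem continuous_slabDepth (c : ℕ × ℚ × ℚ) : Continuous (slabDepth c) := by
  unfold slabDepth; fun_prop

theorem continuous_ratBoxBump (S : Finset (ℕ × ℚ × ℚ)) : Continuous (ratBoxBump S) :=
  continuous_const.max (Continuous.finset_inf'_apply _ fun c _ => continuous_slabDepth c)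

theorem ratBoxBump_nonneg (S : Finset (ℕ × ℚ × ℚ)) (x : HilbertCube) : 0 ≤ ratBoxBump S x :=
  le_max_left _ _

theorem ratBoxBump_le_one (S : Finset (ℕ × ℚ × ℚ)) (x : HilbertCube) : ratBoxBump S x ≤ 1 := by
  refine max_le zero_le_one ((Finset.inf'_le _ (Finset.mem_insert_self _ _)).trans ?_)
  simp only [slabDepth, min_le_iff]
  push_cast
  by_contra! h
  linarith [h.1, h.2]

theorem ratBoxBump_pos_iff (S : Finset (ℕ × ℚ × ℚ)) (x : HilbertCube) :
    0 < ratBoxBump S x ↔ ∀ c ∈ S, (c.2.1 : ℝ) < x c.1 ∧ (x c.1 : ℝ) < c.2.2 := by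
  have h0 := (x 0).2
  simp only [ratBoxBump, lt_max_iff, lt_irrefl, false_or, Finset.lt_inf'_iff,
    Finset.forall_mem_insert, slabDepth, lt_min_iff, sub_pos]
  push_cast
  exact and_iff_right ⟨by linarith [h0.1], by linarith [h0.2]⟩

theorem unitInterval.exists_rat_btwn_subset_of_mem_nhds {z : unitInterval} {t : Set unitInterval}
    (ht : t ∈ 𝓝 z) : ∃ a b : ℚ, (a : ℝ) < z ∧ (z : ℝ) < b ∧
      ∀ w : unitInterval, (a : ℝ) < w → (w : ℝ) < b → w ∈ t := by
  obtain ⟨u, hu, hut⟩ := (mem_nhds_induced Subtype.val z t).mp ht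
  obtain ⟨l, r, ⟨hl, hr⟩, hlr⟩ := mem_nhds_iff_exists_Ioo_subset.mp hu
  obtain ⟨a, hla, haz⟩ := exists_rat_btwn hl
  obtain ⟨b, hzb, hbr⟩ := exists_rat_btwn hr
  exact ⟨a, b, haz, hzb, fun w haw hwb => hut (hlr ⟨hla.trans haw, hwb.trans hbr⟩)⟩

theorem exists_ratBoxBump_pos_subset {x : HilbertCube} {U : Set HilbertCube} (hU : U ∈ 𝓝 x) :
    ∃ S, 0 < ratBoxBump S x ∧ ∀ y, 0 < ratBoxBump S y → y ∈ U := by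
  rw [nhds_pi, Filter.mem_pi'] at hU
  obtain ⟨I, t, ht, hIt⟩ := hU
  choose a b hax hxb hab using fun i => unitInterval.exists_rat_btwn_subset_of_mem_nhds (ht i)
  refine ⟨I.image fun i => (i, a i, b i), ?_, fun y hy => hIt fun i hi => ?_⟩
  · rw [ratBoxBump_pos_iff]
    simp only [Finset.mem_image]
    rintro _ ⟨i, -, rfl⟩
    exact ⟨hax i, hxb i⟩
  · obtain ⟨hay, hyb⟩ := (ratBoxBump_pos_iff _ _).mp hy (i, a i, b i)
      (Finset.mem_image_of_mem _ hi)
    exact hab i (y i) hay hyb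

theorem irrational_slabDepth {x : HilbertCube} (hx : x ∈ Pseq) (c : ℕ × ℚ × ℚ) :
    Irrational (slabDepth c x) :=
  min_rec' _ ((hx c.1).sub_ratCast _) ((hx c.1).ratCast_sub _)

theorem irrational_ratBoxBump_or_eq_zero {x : HilbertCube} (hx : x ∈ Pseq)
    (S : Finset (ℕ × ℚ × ℚ)) : Irrational (ratBoxBump S x) ∨ ratBoxBump S x = 0 :=
  max_rec' (fun r => Irrational r ∨ r = 0) (Or.inr rfl) <| Or.inl <|
    Finset.inf'_mem {r | Irrational r} (fun _ hr _ hs => min_rec' _ hr hs) _ _ _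
      fun c _ => irrational_slabDepth hx c

theorem exists_rat_slabDepth_eq {x : HilbertCube} (hx : x ∈ Qseq) (c : ℕ × ℚ × ℚ) :
    ∃ q : ℚ, slabDepth c x = q := by
  obtain ⟨r, hr⟩ := hx c.1
  exact ⟨min (r - c.2.1) (c.2.2 - r), by simp [slabDepth, hr]⟩

theorem exists_rat_ratBoxBump_eq {x : HilbertCube} (hx : x ∈ Qseq) (S : Finset (ℕ × ℚ × ℚ)) :
    ∃ q : ℚ, ratBoxBump S x = q :=
  max_rec' (fun r : ℝ => ∃ q : ℚ, r = q) ⟨0, Rat.cast_zero.symm⟩ <|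
    Finset.inf'_mem {r : ℝ | ∃ q : ℚ, r = q} (fun _ hr _ hs => min_rec' _ hr hs) _ _ _
      fun c _ => exists_rat_slabDepth_eq hx c

theorem exists_ratBoxBump_separating {A : Set HilbertCube} {F : Set A} (hF : IsClosed F)
    {x : A} (hx : x ∉ F) :
    ∃ S, (∀ y ∈ F, ratBoxBump S (y : HilbertCube) = 0) ∧ 0 < ratBoxBump S x := by
  obtain ⟨U, hU, hUF⟩ := (mem_nhds_induced Subtype.val x Fᶜ).mp (hF.isOpen_compl.mem_nhds hx)
  obtain ⟨S, hSx, hSU⟩ := exists_ratBoxBump_pos_subset hU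
  refine ⟨S, fun y hy => ?_, hSx⟩
  by_contra hne
  exact hUF (hSU _ ((ratBoxBump_nonneg S y).lt_of_ne' hne)) hy

theorem stmt_3_general (F : Set ↥(Pseq ∪ Qseq)) (hF : IsClosed F) :
    ∃ f : ↥(Pseq ∪ Qseq) → unitInterval, Continuous f ∧
      (∀ x : ↥(Pseq ∪ Qseq), (x : HilbertCube) ∈ Pseq → x ∉ F → Irrational (f x : ℝ)) ∧
      (∀ x : ↥(Pseq ∪ Qseq), (x : HilbertCube) ∈ Qseq → ∃ q : ℚ, (f x : ℝ) = (q : ℝ)) ∧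
      F = f ⁻¹' {0} := by
  obtain ⟨f, hf, hfF, hvalues⟩ := exists_continuous_unitInterval_preimage_zero_eq
    (fun S (x : ↥(Pseq ∪ Qseq)) => ratBoxBump S x)
    (fun S => (continuous_ratBoxBump S).comp continuous_subtype_val)
    (fun S _ => ratBoxBump_nonneg S _) (fun S _ => ratBoxBump_le_one S _) F
    fun x hx => exists_ratBoxBump_separating hF hx
  refine ⟨f, hf, fun x hxP hxF => ?_, fun x hxQ => ?_, hfF.symm⟩
  · have hfx0 : (f x : ℝ) ≠ 0 := fun h => hxF (hfF ▸ Subtype.ext h)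
    obtain h0 | ⟨S, q, hq, hfxS⟩ := hvalues x
    · exact absurd h0 hfx0
    rw [hfxS] at hfx0 ⊢
    obtain hirr | h0 := irrational_ratBoxBump_or_eq_zero hxP S
    · exact hirr.ratCast_mul hq
    · simp [h0] at hfx0
  · obtain h0 | ⟨S, q, -, hfxS⟩ := hvalues x
    · exact ⟨0, by simp [h0]⟩
    · obtain ⟨r, hr⟩ := exists_rat_ratBoxBump_eq hxQ S
      exact ⟨q * r, by rw [hfxS, hr]; push_cast; ring⟩

/-- Lemma 3.1: for every nonempty closed `F ⊆ ℙ^ℕ ∪ ℚ^ℕ` there is a continuous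
`f : ℙ^ℕ ∪ ℚ^ℕ → I` with `f(ℙ^ℕ \ F) ⊆ ℙ`, `f(ℚ^ℕ) ⊆ ℚ` and `F = f⁻¹(0)`. -/
theorem stmt_3 (F : Set ↥(Pseq ∪ Qseq)) (hne : F.Nonempty) (hF : IsClosed F) :
    ∃ f : ↥(Pseq ∪ Qseq) → unitInterval, Continuous f ∧
      (∀ x : ↥(Pseq ∪ Qseq), (x : HilbertCube) ∈ Pseq → x ∉ F → Irrational (f x : ℝ)) ∧
      (∀ x : ↥(Pseq ∪ Qseq), (x : HilbertCube) ∈ Qseq → ∃ q : ℚ, (f x : ℝ) = (q : ℝ)) ∧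
      F = f ⁻¹' {0} :=
  stmt_3_general F hF
end
end

section
/- Every zero-dimensional separable metrizable space which is absolutely Fσδ admits a topological embedding onto a closed subspace of ℚ^ℕ, where ℚ denotes the rationals in [0,1] and ℚ^ℕ carries the product topology. -/
open Topology TopologicalSpace Set

noncomputable section

/-!
Embed `X` into the Hilbert cube with `range e = ⋂ k, ⋃ l, F k l`, each `F k l` closed.
Zero-dimensionality provides clopen sets `W k l m` that shrink to `e⁻¹ (F k l)` as `m → ∞`. For
each `k`, a point `x` is coded by the list of stages at which it leaves `W k 0 ·, W k 1 ·, …`,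
up to the first `l` with `e x ∈ F k l`, and this list is read as a finite, hence rational,
continued fraction. Together with the indicators of a countable clopen basis these coordinates
embed `X` into `ℚ^ℕ`. If images of points converge in `ℚ^ℕ` while their images under `e`
converge outside `range e`, hence outside some `⋃ l, F k l`, then their `k`-th digit lists
converge digitwise to an infinite sequence and their `k`-th coordinates converge to an infinite
continued fraction, which is irrational. So the range is closed.
-/

open Filter

lemma List.map_range_prefix_map_range {α : Type*} {f g : ℕ → α} {J n : ℕ} (hJ : J ≤ n)
    (hfg : ∀ i < J, f i = g i) : (List.range J).map f <+: (List.range n).map g := by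
  rw [List.map_congr_left fun i hi => hfg i (List.mem_range.mp hi)]
  have : (List.range n).take J = List.range J := by simp [hJ]
  rw [← this, List.map_take]
  exact List.take_prefix _ _

namespace ContFrac

/-- The finite continued fraction `[0; a₀ + 1, a₁ + 1, …]`; shifting every digit by one makes
all partial quotients positive, so no positivity hypotheses are needed on the digits. -/
def ofDigits : List ℕ → ℝ
  | [] => 0
  | a :: L => ((a : ℝ) + 1 + ofDigits L)⁻¹

@[simp] lemma ofDigits_nil : ofDigits [] = 0 := rfl

@[simp] lemma ofDigits_cons (a : ℕ) (L : List ℕ) :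
    ofDigits (a :: L) = ((a : ℝ) + 1 + ofDigits L)⁻¹ := rfl

lemma ofDigits_nonneg : ∀ L, 0 ≤ ofDigits L
  | [] => le_rfl
  | a :: L => by have := ofDigits_nonneg L; rw [ofDigits_cons]; positivity

lemma ofDigits_cons_le (a : ℕ) (L : List ℕ) : ofDigits (a :: L) ≤ ((a : ℝ) + 1)⁻¹ :=
  inv_anti₀ (by positivity) (le_add_of_nonneg_right (ofDigits_nonneg L))

lemma ofDigits_le_one : ∀ L, ofDigits L ≤ 1
  | [] => zero_le_one
  | a :: L => (ofDigits_cons_le a L).trans (inv_le_one_of_one_le₀ (by simp))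

lemma exists_rat_eq_ofDigits : ∀ L, ∃ q : ℚ, ofDigits L = q
  | [] => ⟨0, by simp⟩
  | a :: L => by
    obtain ⟨q, hq⟩ := exists_rat_eq_ofDigits L
    exact ⟨((a : ℚ) + 1 + q)⁻¹, by rw [ofDigits_cons, hq]; push_cast; rfl⟩

lemma abs_inv_add_sub_inv_add_le {a s t : ℝ} (ha : 1 ≤ a) (hs : 0 ≤ s) (ht : 0 ≤ t) :
    |(a + s)⁻¹ - (a + t)⁻¹| ≤ |s - t| := by
  have hst : 1 ≤ (a + s) * (a + t) := one_le_mul_of_one_le_of_one_le (by linarith) (by linarith)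
  rw [inv_sub_inv (by linarith) (by linarith), abs_div,
    abs_of_pos (a := (a + s) * (a + t)) (by linarith),
    show a + t - (a + s) = -(s - t) by ring, abs_neg]
  exact div_le_self (abs_nonneg _) hst

/-- Two steps of the Gauss map contract by `4`, since `(a + (c + s)⁻¹)(c + s) = a(c + s) + 1`
is at least `2`. -/
lemma abs_inv_add_inv_sub_le {a c s t : ℝ} (ha : 1 ≤ a) (hc : 1 ≤ c) (hs : 0 ≤ s) (ht : 0 ≤ t) :
    |(a + (c + s)⁻¹)⁻¹ - (a + (c + t)⁻¹)⁻¹| ≤ |s - t| / 4 := by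
  have hds : 2 ≤ a * (c + s) + 1 := by nlinarith
  have hdt : 2 ≤ a * (c + t) + 1 := by nlinarith
  have key : (a + (c + s)⁻¹)⁻¹ - (a + (c + t)⁻¹)⁻¹
      = (s - t) / ((a * (c + s) + 1) * (a * (c + t) + 1)) := by
    have : c + s ≠ 0 := by linarith
    have : c + t ≠ 0 := by linarith
    have : a * (c + s) + 1 ≠ 0 := by linarith
    have : a * (c + t) + 1 ≠ 0 := by linarith
    field_simp
    ring
  rw [key, abs_div, abs_of_pos (a := (a * (c + s) + 1) * (a * (c + t) + 1)) (by nlinarith)]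
  gcongr
  nlinarith

lemma abs_ofDigits_cons_sub_cons_le (a : ℕ) (M M' : List ℕ) :
    |ofDigits (a :: M) - ofDigits (a :: M')| ≤ |ofDigits M - ofDigits M'| :=
  abs_inv_add_sub_inv_add_le (by simp) (ofDigits_nonneg M) (ofDigits_nonneg M')

lemma abs_ofDigits_cons_cons_sub_le (a c : ℕ) (M M' : List ℕ) :
    |ofDigits (a :: c :: M) - ofDigits (a :: c :: M')| ≤ |ofDigits M - ofDigits M'| / 4 := by
  simp only [ofDigits_cons]
  exact abs_inv_add_inv_sub_le (by simp) (by simp) (ofDigits_nonneg M) (ofDigits_nonneg M')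

lemma abs_ofDigits_append_sub_le : ∀ L M M' : List ℕ,
    |ofDigits (L ++ M) - ofDigits (L ++ M')| ≤ (1 / 2) ^ (L.length / 2) * |ofDigits M - ofDigits M'|
  | [], M, M' => by simp
  | [a], M, M' => by simpa using abs_ofDigits_cons_sub_cons_le a M M'
  | a :: c :: L, M, M' => by
    have ih := abs_ofDigits_append_sub_le L M M'
    calc |ofDigits (a :: c :: L ++ M) - ofDigits (a :: c :: L ++ M')|
        ≤ |ofDigits (L ++ M) - ofDigits (L ++ M')| / 4 := abs_ofDigits_cons_cons_sub_le a c _ _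
      _ ≤ (1 / 2) ^ (L.length / 2) * |ofDigits M - ofDigits M'| / 4 := by gcongr
      _ ≤ (1 / 2) ^ ((a :: c :: L).length / 2) * |ofDigits M - ofDigits M'| := by
        rw [List.length_cons, List.length_cons,
          show (L.length + 1 + 1) / 2 = L.length / 2 + 1 by omega,
          pow_succ]
        have := abs_nonneg (ofDigits M - ofDigits M')
        have : (0 : ℝ) ≤ (1 / 2) ^ (L.length / 2) := by positivity
        nlinarith

lemma abs_ofDigits_sub_le_of_isPrefix {L L' : List ℕ} (h : L <+: L') :
    |ofDigits L' - ofDigits L| ≤ (1 / 2) ^ (L.length / 2) := by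
  obtain ⟨T, rfl⟩ := h
  have := abs_ofDigits_append_sub_le L T []
  rw [List.append_nil, ofDigits_nil, sub_zero, abs_of_nonneg (ofDigits_nonneg T)] at this
  exact this.trans (mul_le_of_le_one_right (by positivity) (ofDigits_le_one T))

lemma abs_ofDigits_append_sub_le_of_head (L T : List ℕ) {M : ℕ} (hT : ∀ a ∈ T.head?, M ≤ a) :
    |ofDigits (L ++ T) - ofDigits L| ≤ ((M : ℝ) + 1)⁻¹ := by
  cases T with
  | nil =>
    simp only [List.append_nil, sub_self, abs_zero, inv_nonneg]
    positivity
  | cons a T =>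
    have := abs_ofDigits_append_sub_le L (a :: T) []
    rw [List.append_nil, ofDigits_nil, sub_zero, abs_of_nonneg (ofDigits_nonneg _)] at this
    calc |ofDigits (L ++ a :: T) - ofDigits L|
        ≤ (1 / 2) ^ (L.length / 2) * ofDigits (a :: T) := this
      _ ≤ ofDigits (a :: T) :=
        mul_le_of_le_one_left (ofDigits_nonneg _) (pow_le_one₀ (by norm_num) (by norm_num))
      _ ≤ ((a : ℝ) + 1)⁻¹ := ofDigits_cons_le a T
      _ ≤ ((M : ℝ) + 1)⁻¹ := by gcongr; exact_mod_cast hT a (by simp)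

/-- The infinite continued fraction `[0; b₀ + 1, b₁ + 1, …]`. -/
def ofSeq (b : ℕ → ℕ) : ℝ :=
  limUnder atTop fun n => ofDigits ((List.range n).map b)

lemma tendsto_ofDigits_ofSeq (b : ℕ → ℕ) :
    Tendsto (fun n => ofDigits ((List.range n).map b)) atTop (𝓝 (ofSeq b)) := by
  refine CauchySeq.tendsto_limUnder (Metric.cauchySeq_iff'.mpr fun ε hε => ?_)
  obtain ⟨N, hN⟩ := exists_pow_lt_of_lt_one hε (by norm_num : (1 / 2 : ℝ) < 1)
  refine ⟨2 * N, fun n hn => ?_⟩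
  have := abs_ofDigits_sub_le_of_isPrefix
    (List.map_range_prefix_map_range (f := b) (g := b) hn fun _ _ => rfl)
  rw [Real.dist_eq]
  simp only [List.length_map, List.length_range, Nat.mul_div_cancel_left N two_pos] at this
  exact this.trans_lt hN

lemma tendsto_ofDigits_of_eventually_isPrefix {ι : Type*} {l : Filter ι} {D : ι → List ℕ}
    {b : ℕ → ℕ} (h : ∀ J, ∀ᶠ i in l, (List.range J).map b <+: D i) :
    Tendsto (fun i => ofDigits (D i)) l (𝓝 (ofSeq b)) := by
  refine Metric.tendsto_nhds.mpr fun ε hε => ?_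
  have hpow : Tendsto (fun J : ℕ => (1 / 2 : ℝ) ^ (J / 2)) atTop (𝓝 0) :=
    (tendsto_pow_atTop_nhds_zero_of_lt_one (by norm_num) (by norm_num)).comp
      (Nat.tendsto_div_const_atTop two_ne_zero)
  obtain ⟨J, hJ, hJ'⟩ := ((Metric.tendsto_nhds.mp (tendsto_ofDigits_ofSeq b) (ε / 2)
    (half_pos hε)).and (hpow.eventually (gt_mem_nhds (half_pos hε)))).exists
  filter_upwards [h J] with i hi
  have := abs_ofDigits_sub_le_of_isPrefix hi
  simp only [List.length_map, List.length_range] at this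
  rw [Real.dist_eq] at hJ ⊢
  calc |ofDigits (D i) - ofSeq b|
      ≤ |ofDigits (D i) - ofDigits ((List.range J).map b)| +
        |ofDigits ((List.range J).map b) - ofSeq b| := abs_sub_le _ _ _
    _ < ε / 2 + ε / 2 := add_lt_add_of_le_of_lt (this.trans hJ'.le) hJ
    _ = ε := add_halves ε

lemma ofSeq_nonneg (b : ℕ → ℕ) : 0 ≤ ofSeq b :=
  ge_of_tendsto' (tendsto_ofDigits_ofSeq b) fun _ => ofDigits_nonneg _

lemma ofSeq_eq (b : ℕ → ℕ) : ofSeq b = ((b 0 : ℝ) + 1 + ofSeq (fun n => b (n + 1)))⁻¹ := by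
  have hlim := (tendsto_ofDigits_ofSeq b).comp (tendsto_add_atTop_nat 1)
  have hcons : ∀ n, ofDigits ((List.range (n + 1)).map b) =
      ((b 0 : ℝ) + 1 + ofDigits ((List.range n).map fun n => b (n + 1)))⁻¹ := by
    intro n
    rw [List.range_succ_eq_map, List.map_cons, List.map_map, ofDigits_cons]
    rfl
  simp only [Function.comp_def, hcons] at hlim
  have hpos : (b 0 : ℝ) + 1 + ofSeq (fun n => b (n + 1)) ≠ 0 := by
    have := ofSeq_nonneg fun n => b (n + 1)
    positivity
  exact tendsto_nhds_unique hlim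
    (((tendsto_ofDigits_ofSeq _).const_add _).inv₀ hpos)

lemma ofSeq_pos (b : ℕ → ℕ) : 0 < ofSeq b := by
  rw [ofSeq_eq]
  have := ofSeq_nonneg fun n => b (n + 1)
  positivity

lemma ofSeq_lt_one (b : ℕ → ℕ) : ofSeq b < 1 := by
  rw [ofSeq_eq]
  have := ofSeq_pos fun n => b (n + 1)
  exact inv_lt_one_of_one_lt₀ (by linarith [(b 0).cast_nonneg (α := ℝ)])

/-- Euclid's algorithm never terminates on an infinite continued fraction: if `ofSeq b * n` is an
integer `z`, then `ofSeq (b ∘ succ) * z` is the integer `n - (b 0 + 1) z`, with `0 < z < n`. -/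
lemma eq_zero_of_ofSeq_mul_eq (n : ℕ) : ∀ (b : ℕ → ℕ) (z : ℤ), ofSeq b * n = z → n = 0 := by
  induction n using Nat.strong_induction_on with
  | _ n ih =>
  intro b z hz
  by_contra hn
  set r := ofSeq fun n => b (n + 1)
  have hr : 0 < r := ofSeq_pos _
  have hn' : (0 : ℝ) < n := by positivity
  have hz0 : (0 : ℝ) < z := hz ▸ mul_pos (ofSeq_pos b) hn'
  have hzn : (z : ℝ) < n := hz ▸ mul_lt_of_lt_one_left hn' (ofSeq_lt_one b)
  have hz' : (z.toNat : ℝ) = z := by exact_mod_cast Int.toNat_of_nonneg (by exact_mod_cast hz0.le)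
  have hrec : (n : ℝ) = z * (b 0 + 1 + r) := by
    have hb : ofSeq b = ((b 0 : ℝ) + 1 + r)⁻¹ := ofSeq_eq b
    have : (b 0 : ℝ) + 1 + r ≠ 0 := by positivity
    rw [← hz, hb]
    field_simp
  have hnext : r * z.toNat = ((n - (b 0 + 1) * z : ℤ) : ℝ) := by
    rw [hz']
    push_cast
    linear_combination -hrec
  have := ih z.toNat (by exact_mod_cast hz' ▸ hzn) _ _ hnext
  rw [this, Nat.cast_zero] at hz'
  linarith

lemma irrational_ofSeq (b : ℕ → ℕ) : Irrational (ofSeq b) := by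
  rintro ⟨q, hq⟩
  have := eq_zero_of_ofSeq_mul_eq q.den b q.num (by rw [← hq]; exact_mod_cast Rat.mul_den_eq_num q)
  exact q.den_nz this

end ContFrac

section FirstIndex

variable {X : Type*} {U : ℕ → Set X} {x : X} {m n : ℕ}

/-- The least `n` with `x ∈ U n`; junk value `0` if there is none. -/
def firstIndex (U : ℕ → Set X) (x : X) : ℕ := sInf {n | x ∈ U n}

lemma mem_firstIndex (hx : ∃ n, x ∈ U n) : x ∈ U (firstIndex U x) := Nat.sInf_mem hx

lemma notMem_of_lt_firstIndex (h : m < firstIndex U x) : x ∉ U m := Nat.notMem_of_lt_sInf h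

lemma firstIndex_le (hx : x ∈ U n) : firstIndex U x ≤ n := Nat.sInf_le hx

lemma le_firstIndex (hx : ∃ n, x ∈ U n) (h : ∀ m < n, x ∉ U m) : n ≤ firstIndex U x :=
  not_lt.mp fun hlt => h _ hlt (mem_firstIndex hx)

lemma firstIndex_eq (hx : x ∈ U n) (h : ∀ m < n, x ∉ U m) : firstIndex U x = n :=
  le_antisymm (firstIndex_le hx) (le_firstIndex ⟨n, hx⟩ h)

variable [TopologicalSpace X]

lemma eventually_firstIndex_eq (hU : ∀ n, IsClopen (U n)) (hx : ∃ n, x ∈ U n) :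
    ∀ᶠ y in 𝓝 x, y ∈ U (firstIndex U x) ∧ firstIndex U y = firstIndex U x := by
  have hlt : ∀ᶠ y in 𝓝 x, ∀ m < firstIndex U x, y ∉ U m :=
    (eventually_all_finite (finite_lt_nat _)).mpr fun m hm =>
      (hU m).isClosed.isOpen_compl.mem_nhds (notMem_of_lt_firstIndex hm)
  filter_upwards [(hU _).isOpen.mem_nhds (mem_firstIndex hx), hlt] with y hy hy'
  exact ⟨hy, firstIndex_eq hy hy'⟩

lemma continuous_firstIndex (hU : ∀ n, IsClopen (U n)) (hcover : ∀ x, ∃ n, x ∈ U n) :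
    Continuous (firstIndex U) :=
  continuous_iff_continuousAt.mpr fun x => by
    rw [ContinuousAt, nhds_discrete ℕ, tendsto_pure]
    exact (eventually_firstIndex_eq hU (hcover x)).mono fun _ h => h.2

end FirstIndex

namespace ZeroDimSpace

variable {X : Type*} [TopologicalSpace X] [SecondCountableTopology X]

lemma exists_countable_clopen_basis (h : ZeroDimSpace X) :
    ∃ B : ℕ → Set X, (∀ n, IsClopen (B n)) ∧ IsTopologicalBasis (range B) := by
  obtain ⟨C, hC, hCclopen⟩ := h
  obtain ⟨S, hSC, hScount, hS⟩ := hC.exists_countable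
  obtain ⟨B, hB⟩ := (hScount.insert ∅).exists_eq_range (insert_nonempty _ _)
  refine ⟨B, fun n => ?_, hB ▸ hS.insert_empty⟩
  obtain h | h := (hB ▸ mem_range_self n : B n ∈ insert ∅ S)
  · exact h ▸ isClopen_empty
  · exact hCclopen _ (hSC h)

/-- Cover `X` by basic clopen sets each missing `C₀` or `C₁`; the first one containing a point
decides on which side of the partition it lies. -/
lemma exists_isClopen_between (h : ZeroDimSpace X) {C₀ C₁ : Set X} (hC₀ : IsClosed C₀)
    (hC₁ : IsClosed C₁) (hd : Disjoint C₀ C₁) :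
    ∃ V, IsClopen V ∧ C₀ ⊆ V ∧ Disjoint V C₁ := by
  obtain ⟨B, hB, hbasis⟩ := h.exists_countable_clopen_basis
  set U : ℕ → Set X := fun n => ⋃ (_ : Disjoint (B n) C₀ ∨ Disjoint (B n) C₁), B n
  have hU : ∀ n, IsClopen (U n) := fun n => isClopen_iUnion_of_finite fun _ => hB n
  have hUdisj : ∀ n, Disjoint (U n) C₀ ∨ Disjoint (U n) C₁ := by
    intro n
    by_cases hn : Disjoint (B n) C₀ ∨ Disjoint (B n) C₁ <;> simp [U, hn]
  have hcover : ∀ x, ∃ n, x ∈ U n := by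
    intro x
    have hx : x ∈ C₀ᶜ ∨ x ∈ C₁ᶜ := by
      by_contra! hx
      exact disjoint_left.mp hd (not_not.mp hx.1) (not_not.mp hx.2)
    obtain ⟨_, ⟨n, rfl⟩, hxn, hn⟩ : ∃ C ∈ range B, x ∈ C ∧ (Disjoint C C₀ ∨ Disjoint C C₁) := by
      rcases hx with hx | hx
      · obtain ⟨C, hC, hxC, hCsub⟩ := hbasis.exists_subset_of_mem_open hx hC₀.isOpen_compl
        exact ⟨C, hC, hxC, .inl (subset_compl_iff_disjoint_right.mp hCsub)⟩
      · obtain ⟨C, hC, hxC, hCsub⟩ := hbasis.exists_subset_of_mem_open hx hC₁.isOpen_compl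
        exact ⟨C, hC, hxC, .inr (subset_compl_iff_disjoint_right.mp hCsub)⟩
    exact ⟨n, mem_iUnion.mpr ⟨hn, hxn⟩⟩
  refine ⟨firstIndex U ⁻¹' {n | Disjoint (U n) C₁},
    (isClopen_discrete _).preimage (continuous_firstIndex hU hcover), fun x hx => ?_,
    disjoint_left.mpr fun x hx => disjoint_left.mp hx (mem_firstIndex (hcover x))⟩
  exact (hUdisj _).resolve_left fun h => disjoint_left.mp h (mem_firstIndex (hcover x)) hx

lemma exists_clopen_approx (h : ZeroDimSpace X) {Y : Type*} [TopologicalSpace Y]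
    [PseudoMetrizableSpace Y] {e : X → Y} (he : Continuous e) {F : Set Y} (hF : IsClosed F) :
    ∃ V : ℕ → Set X, (∀ m, IsClopen (V m)) ∧ (∀ m, e ⁻¹' F ⊆ V m) ∧
      ⋂ m, closure (e '' V m) ⊆ F := by
  let := pseudoMetrizableSpacePseudoMetric Y
  have hpos : ∀ m : ℕ, (0 : ℝ) < 1 / (m + 1) := fun m => Nat.one_div_pos_of_nat
  choose V hV hFV hVth using fun m : ℕ => h.exists_isClopen_between (hF.preimage he)
    (Metric.isOpen_thickening.isClosed_compl.preimage he)
    (disjoint_compl_right.mono_left (preimage_mono (Metric.self_subset_thickening (hpos m) F)))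
  refine ⟨V, hV, hFV, fun y hy => ?_⟩
  have hy' : ∀ m : ℕ, y ∈ Metric.cthickening (1 / (m + 1)) F := fun m => by
    have : e '' V m ⊆ Metric.thickening (1 / (m + 1)) F :=
      image_subset_iff.mpr (disjoint_compl_right_iff_subset.mp (hVth m))
    exact closure_minimal (this.trans (Metric.thickening_subset_cthickening _ _))
      Metric.isClosed_cthickening (mem_iInter.mp hy m)
  rw [← hF.closure_eq, Metric.closure_eq_iInter_cthickening' F (range fun m : ℕ => 1 / (m + 1 : ℝ))]
  · simpa using hy'
  · intro ε hε
    obtain ⟨m, hm⟩ := exists_nat_one_div_lt hε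
    exact ⟨_, mem_range_self m, hpos m, hm.le⟩

end ZeroDimSpace

lemma Ultrafilter.exists_eventually_eq_of_eventually_le {X : Type*} {𝒰 : Ultrafilter X}
    {f : X → ℕ} {n : ℕ} (h : ∀ᶠ x in 𝒰, f x ≤ n) : ∃ c, ∀ᶠ x in 𝒰, f x = c := by
  obtain ⟨c, -, hc⟩ := (Ultrafilter.eventually_exists_mem_iff (finite_Iic n)
    (P := fun c x => f x = c)).mp (h.mono fun x hx => ⟨f x, hx, rfl⟩)
  exact ⟨c, hc⟩

section ExitDigits

variable {X : Type*} (W : ℕ → ℕ → Set X)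

/-- For each level `l` below the first one with `x ∈ ⋂ m, W l m`, the first stage `m` at which
`x` leaves `W l m`. -/
def exitDigits (x : X) : List ℕ :=
  (List.range (firstIndex (fun l => ⋂ m, W l m) x)).map fun l => firstIndex (fun m => (W l m)ᶜ) x

lemma exists_eventually_isPrefix_exitDigits {𝒰 : Ultrafilter X}
    (hcover : ∀ x, ∃ l, x ∈ ⋂ m, W l m) (h : ∀ l, ∃ m, ∀ᶠ x in 𝒰, x ∉ W l m) :
    ∃ b : ℕ → ℕ, ∀ J, ∀ᶠ x in 𝒰, (List.range J).map b <+: exitDigits W x := by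
  have hstable : ∀ l, ∃ c, ∀ᶠ x in 𝒰, firstIndex (fun m => (W l m)ᶜ) x = c := fun l =>
    let ⟨_, hm⟩ := h l
    Ultrafilter.exists_eventually_eq_of_eventually_le (hm.mono fun _ hx => firstIndex_le hx)
  choose b hb using hstable
  refine ⟨b, fun J => ?_⟩
  have hJ : ∀ᶠ x in 𝒰, ∀ l < J, x ∉ ⋂ m, W l m ∧ firstIndex (fun m => (W l m)ᶜ) x = b l :=
    (eventually_all_finite (finite_lt_nat J)).mpr fun l _ =>
      let ⟨m, hm⟩ := h l
      (hm.mono fun _ hx hmem => hx (mem_iInter.mp hmem m)).and (hb l)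
  filter_upwards [hJ] with x hx
  exact List.map_range_prefix_map_range (le_firstIndex (hcover x) fun l hl => (hx l hl).1)
    fun l hl => (hx l hl).2.symm

variable [TopologicalSpace X]

lemma eventually_exitDigits_eq_append (hW : ∀ l m, IsClopen (W l m))
    (hcover : ∀ x, ∃ l, x ∈ ⋂ m, W l m) (x : X) (M : ℕ) :
    ∀ᶠ y in 𝓝 x, ∃ T, exitDigits W y = exitDigits W x ++ T ∧ ∀ a ∈ T.head?, M ≤ a := by
  set L := firstIndex (fun l => ⋂ m, W l m) x
  have hlow : ∀ᶠ y in 𝓝 x, ∀ l < L, (∃ m, y ∉ W l m) ∧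
      firstIndex (fun m => (W l m)ᶜ) y = firstIndex (fun m => (W l m)ᶜ) x :=
    (eventually_all_finite (finite_lt_nat L)).mpr fun l hl => by
      have hx : ∃ m, x ∈ (W l m)ᶜ := by simpa using notMem_of_lt_firstIndex hl
      exact (eventually_firstIndex_eq (fun m => (hW l m).compl) hx).mono
        fun y hy => ⟨⟨_, hy.1⟩, hy.2⟩
  have hhigh : ∀ᶠ y in 𝓝 x, ∀ m < M, y ∈ W L m :=
    (eventually_all_finite (finite_lt_nat M)).mpr fun m _ =>
      (hW L m).isOpen.mem_nhds (mem_iInter.mp (mem_firstIndex (hcover x)) m)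
  filter_upwards [hlow, hhigh] with y hy hyM
  set L' := firstIndex (fun l => ⋂ m, W l m) y
  have hLL' : L ≤ L' := le_firstIndex (hcover y) fun l hl hmem =>
    let ⟨m, hm⟩ := (hy l hl).1
    hm (mem_iInter.mp hmem m)
  obtain ⟨k, hk⟩ := Nat.exists_eq_add_of_le hLL'
  refine ⟨(List.range k).map fun i => firstIndex (fun m => (W (L + i) m)ᶜ) y, ?_, ?_⟩
  · change (List.range L').map _ = (List.range L).map _ ++ _
    rw [hk, List.range_add, List.map_append, List.map_map]
    exact congrArg₂ _ (List.map_congr_left fun l hl => (hy l (List.mem_range.mp hl)).2) rfl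
  · cases k with
    | zero => simp
    | succ k =>
      have hyL : ∃ m, y ∈ (W L m)ᶜ := by
        simpa using notMem_of_lt_firstIndex (U := fun l => ⋂ m, W l m) (show L < L' by omega)
      simp only [List.range_succ_eq_map, List.map_cons, add_zero, List.head?_cons,
        Option.mem_def, Option.some.injEq, forall_eq']
      exact le_firstIndex hyL fun m hm hy' => hy' (hyM m hm)

lemma continuous_ofDigits_exitDigits (hW : ∀ l m, IsClopen (W l m))
    (hcover : ∀ x, ∃ l, x ∈ ⋂ m, W l m) : Continuous fun x => ContFrac.ofDigits (exitDigits W x) :=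
  continuous_iff_continuousAt.mpr fun x => Metric.tendsto_nhds.mpr fun ε hε => by
    obtain ⟨M, hM⟩ := exists_nat_one_div_lt hε
    filter_upwards [eventually_exitDigits_eq_append W hW hcover x M] with y ⟨T, hT, hhead⟩
    rw [Real.dist_eq, hT]
    exact (ContFrac.abs_ofDigits_append_sub_le_of_head _ _ hhead).trans_lt (by simpa using hM)

end ExitDigits

lemma isInducing_of_isTopologicalBasis {X Y : Type*} [TopologicalSpace X]
    [TopologicalSpace Y] {f : X → Y} (hf : Continuous f) {B : Set (Set X)}
    (hB : IsTopologicalBasis B) (h : ∀ s ∈ B, ∃ V, IsOpen V ∧ f ⁻¹' V = s) : IsInducing f := by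
  refine ⟨le_antisymm (continuous_iff_le_induced.mp hf) ?_⟩
  rw [hB.eq_generateFrom]
  refine le_generateFrom fun s hs => ?_
  obtain ⟨V, hV, rfl⟩ := h s hs
  exact isOpen_induced hV

lemma isClosed_range_of_forall_ultrafilter {X Y Z : Type*} [TopologicalSpace X]
    [TopologicalSpace Y] [CompactSpace Y] [TopologicalSpace Z] [T2Space Z] {e : X → Y}
    (he : IsEmbedding e) {f : X → Z} (hf : Continuous f)
    (H : ∀ (𝒰 : Ultrafilter X) (y : Y) (z : Z), Tendsto e 𝒰 (𝓝 y) → Tendsto f 𝒰 (𝓝 z) →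
      y ∈ range e) : IsClosed (range f) := by
  refine closure_subset_iff_isClosed.mp fun z hz => ?_
  obtain ⟨𝒰, -, hz⟩ := mapClusterPt_iff_ultrafilter.mp
    (show MapClusterPt z ⊤ f by rwa [MapClusterPt, map_top, ← mem_closure_iff_clusterPt])
  obtain ⟨y, -, hy⟩ := isCompact_univ.ultrafilter_le_nhds (𝒰.map e) (by simp)
  obtain ⟨x, rfl⟩ := H 𝒰 y z hy hz
  exact ⟨x, tendsto_nhds_unique ((hf.tendsto x).comp (he.tendsto_nhds_iff.mpr hy)) hz⟩

lemma exists_eventually_notMem {X Y : Type*} [TopologicalSpace Y] {l : Filter X} {e : X → Y}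
    {y : Y} (he : Tendsto e l (𝓝 y)) {V : ℕ → Set X} (hy : y ∉ ⋂ m, closure (e '' V m)) :
    ∃ m, ∀ᶠ x in l, x ∉ V m := by
  obtain ⟨m, hm⟩ := by simpa using hy
  exact ⟨m, (he.eventually (isClosed_closure.isOpen_compl.mem_nhds hm)).mono
    fun x hx hxV => hx (subset_closure (mem_image_of_mem e hxV))⟩

section QseqMap

variable {X : Type*} (B : ℕ → Set X) (W : ℕ → ℕ → ℕ → Set X)

def toHilbertCube (x : X) : HilbertCube := fun n =>
  Sum.elim (fun i => (B i).indicator 1 x)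
    (fun k => ⟨ContFrac.ofDigits (exitDigits (W k) x), ContFrac.ofDigits_nonneg _,
      ContFrac.ofDigits_le_one _⟩) (Equiv.natSumNatEquivNat.symm n)

lemma toHilbertCube_inl (x : X) (i : ℕ) :
    toHilbertCube B W x (Equiv.natSumNatEquivNat (.inl i)) = (B i).indicator 1 x := by
  simp only [toHilbertCube, Equiv.symm_apply_apply, Sum.elim_inl]

lemma toHilbertCube_inr (x : X) (k : ℕ) :
    (toHilbertCube B W x (Equiv.natSumNatEquivNat (.inr k)) : ℝ) =
      ContFrac.ofDigits (exitDigits (W k) x) := by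
  simp only [toHilbertCube, Equiv.symm_apply_apply, Sum.elim_inr]

lemma toHilbertCube_mem_Qseq (x : X) : toHilbertCube B W x ∈ Qseq := by
  intro n
  obtain ⟨i | k, rfl⟩ := Equiv.natSumNatEquivNat.surjective n
  · rw [toHilbertCube_inl]
    by_cases hx : x ∈ B i
    · exact ⟨1, by simp [hx]⟩
    · exact ⟨0, by simp [hx]⟩
  · rw [toHilbertCube_inr]
    exact ContFrac.exists_rat_eq_ofDigits _

variable [TopologicalSpace X]

lemma continuous_toHilbertCube (hB : ∀ i, IsClopen (B i)) (hW : ∀ k l m, IsClopen (W k l m))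
    (hcover : ∀ k x, ∃ l, x ∈ ⋂ m, W k l m) : Continuous (toHilbertCube B W) := by
  refine continuous_pi fun n => ?_
  obtain ⟨i | k, rfl⟩ := Equiv.natSumNatEquivNat.surjective n
  · simp only [toHilbertCube_inl]
    exact (hB i).continuous_indicator continuous_const
  · exact ((continuous_ofDigits_exitDigits (W k) (hW k) (hcover k)).subtype_mk
      (p := (· ∈ unitInterval))
      fun _ => ⟨ContFrac.ofDigits_nonneg _, ContFrac.ofDigits_le_one _⟩).congr
      fun x => Subtype.ext (toHilbertCube_inr B W x k).symm

lemma isEmbedding_toHilbertCube [T0Space X] (hB : ∀ i, IsClopen (B i))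
    (hbasis : IsTopologicalBasis (range B)) (hW : ∀ k l m, IsClopen (W k l m))
    (hcover : ∀ k x, ∃ l, x ∈ ⋂ m, W k l m) : IsEmbedding (toHilbertCube B W) := by
  refine (isInducing_of_isTopologicalBasis (continuous_toHilbertCube B W hB hW hcover) hbasis
    ?_).isEmbedding
  rintro _ ⟨i, rfl⟩
  refine ⟨{y | y (Equiv.natSumNatEquivNat (.inl i)) ≠ 0},
    isOpen_ne_fun (continuous_apply _) continuous_const, ?_⟩
  ext x
  rw [mem_preimage, mem_ofPred_eq, toHilbertCube_inl, Set.indicator_apply_ne_zero]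
  simp

end QseqMap

/-- Comment 4.1: every zero-dimensional separable metrizable absolutely `Fσδ` space
embeds onto a closed subspace of `ℚ^ℕ`. -/
theorem stmt_5 (X : Type*) [TopologicalSpace X] [MetrizableSpace X] [SeparableSpace X]
    (h0 : ZeroDimSpace X) (habs : AbsolutelyFσδ X) :
    ∃ h : X → ↥Qseq, IsEmbedding h ∧ IsClosed (range h) := by
  let := pseudoMetrizableSpacePseudoMetric X
  have := UniformSpace.secondCountable_of_separable X
  obtain ⟨e, he, F, hF, hrange⟩ := habs
  choose W hW hFW hWF using fun k l => h0.exists_clopen_approx he.continuous (hF k l)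
  obtain ⟨B, hB, hbasis⟩ := h0.exists_countable_clopen_basis
  have hcover : ∀ k x, ∃ l, x ∈ ⋂ m, W k l m := fun k x => by
    obtain ⟨l, hl⟩ := mem_iUnion.mp (mem_iInter.mp (hrange ▸ mem_range_self x) k)
    exact ⟨l, mem_iInter.mpr fun m => hFW k l m hl⟩
  refine ⟨codRestrict _ _ (toHilbertCube_mem_Qseq B W),
    (isEmbedding_toHilbertCube B W hB hbasis hW hcover).codRestrict _ _,
    isClosed_range_of_forall_ultrafilter he
      ((continuous_toHilbertCube B W hB hW hcover).codRestrict _) fun 𝒰 y p hy hp => ?_⟩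
  by_contra hyr
  obtain ⟨k, hk⟩ : ∃ k, ∀ l, y ∉ F k l := by simpa [hrange] using hyr
  obtain ⟨b, hb⟩ := exists_eventually_isPrefix_exitDigits (W k) (hcover k) fun l =>
    exists_eventually_notMem hy fun hyl => hk l (hWF k l hyl)
  obtain ⟨q, hq⟩ := p.2 (Equiv.natSumNatEquivNat (.inr k))
  have hcoord : Tendsto (fun x => ContFrac.ofDigits (exitDigits (W k) x)) 𝒰 (𝓝 q) := by
    have hc : Continuous
        fun p : Qseq => ((p : HilbertCube) (Equiv.natSumNatEquivNat (.inr k)) : ℝ) :=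
      continuous_subtype_val.comp ((continuous_apply _).comp continuous_subtype_val)
    simpa only [← hq, Function.comp_def, val_codRestrict_apply, toHilbertCube_inr] using
      (hc.tendsto p).comp hp
  exact ContFrac.irrational_ofSeq b ⟨q, tendsto_nhds_unique hcoord
    (ContFrac.tendsto_ofDigits_of_eventually_isPrefix hb)⟩
end
end

section
/- Every zero-dimensional σ-compact separable metrizable space admits a topological embedding onto a closed subspace of 2^ℕ × ℚ, where 2^ℕ is the Cantor space and ℚ is the space of rational numbers in [0,1] with its usual topology. -/
open Topology TopologicalSpace Set

noncomputable section

/-- The rationals in `[0,1]`, as a subspace of `ℝ`. -/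
def QunitSet : Set ℝ := {x | x ∈ Set.Icc (0 : ℝ) 1 ∧ ∃ q : ℚ, x = (q : ℝ)}

/-!
Embed `X` into the Cantor space `2^ℕ` via a countable clopen base. Its image `F` is σ-compact, so
the complement of `F` is the intersection of the decreasing open sets `(K₀ ∪ ⋯ ∪ Kₙ)ᶜ`; cutting
each of them into disjoint clopen pieces gives clopen sets `Cₘ` such that a point lies in
infinitely many `Cₘ` exactly when it is outside `F`. The map `g y = ∑_{y ∈ Cₘ} 2^{-(m+1)!}` is
then continuous, rational on `F` and a Liouville number, hence irrational, off `F`. So `F` is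
`g⁻¹ ℚ`, and `x ↦ (e x, g (e x))` maps `X` onto the closed set `{(y, q) | g y = q}` of `2^ℕ × ℚ`.
-/

open Function

section Liouville

open Nat

/-- The shift `m + 1` keeps `liouvilleSum S` in `[0, 1]`. -/
def liouvilleTerm (S : Set ℕ) : ℕ → ℝ := S.indicator fun m => 1 / 2 ^ (m + 1)!

def liouvilleSum (S : Set ℕ) : ℝ := ∑' m, liouvilleTerm S m

lemma liouvilleTerm_of_mem {S : Set ℕ} {m : ℕ} (hm : m ∈ S) :
    liouvilleTerm S m = 1 / 2 ^ (m + 1)! :=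
  indicator_of_mem hm _

lemma liouvilleTerm_of_notMem {S : Set ℕ} {m : ℕ} (hm : m ∉ S) : liouvilleTerm S m = 0 :=
  indicator_of_notMem hm _

lemma liouvilleTerm_nonneg (S : Set ℕ) (m : ℕ) : 0 ≤ liouvilleTerm S m :=
  indicator_nonneg (fun _ _ => by positivity) m

lemma liouvilleTerm_le (S : Set ℕ) (m : ℕ) : liouvilleTerm S m ≤ 1 / 2 / 2 ^ m := by
  refine indicator_le' (g := fun m : ℕ => (1 : ℝ) / 2 / 2 ^ m) (fun m _ => ?_)
    (fun m _ => by positivity) m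
  calc 1 / (2 : ℝ) ^ (m + 1)! ≤ 1 / 2 ^ (m + 1) :=
        one_div_pow_le_one_div_pow_of_le one_le_two (self_le_factorial _)
    _ = 1 / 2 / 2 ^ m := by ring

lemma summable_liouvilleTerm (S : Set ℕ) : Summable (liouvilleTerm S) :=
  (summable_geometric_two' 1).of_nonneg_of_le (liouvilleTerm_nonneg S) (liouvilleTerm_le S)

lemma liouvilleSum_mem_Icc (S : Set ℕ) : liouvilleSum S ∈ Icc 0 1 :=
  ⟨tsum_nonneg (liouvilleTerm_nonneg S),
    tsum_geometric_two' 1 ▸ (summable_liouvilleTerm S).tsum_le_tsum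
      (liouvilleTerm_le S) (summable_geometric_two' 1)⟩

lemma Set.Finite.exists_rat_liouvilleSum_eq {S : Set ℕ} (hS : S.Finite) :
    ∃ q : ℚ, liouvilleSum S = q := by
  refine ⟨∑ m ∈ hS.toFinset, 1 / (2 : ℚ) ^ (m + 1)!, ?_⟩
  rw [liouvilleSum, tsum_eq_sum (s := hS.toFinset)
    fun m hm => liouvilleTerm_of_notMem (by simpa using hm)]
  push_cast
  exact Finset.sum_congr rfl fun m hm => liouvilleTerm_of_mem (by simpa using hm)

lemma exists_sum_range_liouvilleTerm_eq (S : Set ℕ) (k : ℕ) :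
    ∃ p : ℕ, ∑ m ∈ Finset.range (k + 1), liouvilleTerm S m = p / 2 ^ (k + 1)! := by
  classical
  refine ⟨∑ m ∈ Finset.range (k + 1), if m ∈ S then 2 ^ ((k + 1)! - (m + 1)!) else 0, ?_⟩
  rw [Nat.cast_sum, Finset.sum_div]
  refine Finset.sum_congr rfl fun m hm => ?_
  have hle : (m + 1)! ≤ (k + 1)! := factorial_le (by simpa using hm)
  by_cases hmS : m ∈ S
  · rw [liouvilleTerm_of_mem hmS, if_pos hmS, Nat.cast_pow, Nat.cast_ofNat,
      div_eq_div_iff (by positivity) (by positivity), one_mul, ← pow_add, Nat.sub_add_cancel hle]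
  · rw [liouvilleTerm_of_notMem hmS, if_neg hmS, Nat.cast_zero, zero_div]

/-- The partial sum up to `k` has denominator `b = 2 ^ (k + 1)!`, and the tail is dominated by that
of Liouville's constant in base 2, which `LiouvilleNumber.remainder_lt` bounds by `1 / b ^ (k + 1)`.
-/
lemma Set.Infinite.liouville_liouvilleSum {S : Set ℕ} (hS : S.Infinite) :
    Liouville (liouvilleSum S) := by
  intro n
  obtain ⟨k, -, hnk⟩ := hS.exists_gt n
  obtain ⟨p, hp⟩ := exists_sum_range_liouvilleTerm_eq S k
  set R := ∑' i, liouvilleTerm S (i + (k + 1))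
  have hsplit : liouvilleSum S = p / 2 ^ (k + 1)! + R := by
    rw [← hp]; exact ((summable_liouvilleTerm S).sum_add_tsum_nat_add _).symm
  have htail := (summable_nat_add_iff (k + 1)).2 (summable_liouvilleTerm S)
  have hR_pos : 0 < R := by
    obtain ⟨l, hlS, hkl⟩ := hS.exists_gt k
    refine htail.tsum_pos (fun i => liouvilleTerm_nonneg S _) (l - (k + 1)) ?_
    rw [Nat.sub_add_cancel hkl, liouvilleTerm_of_mem hlS]
    positivity
  have hR_lt : R < 1 / ((2 : ℝ) ^ (k + 1)!) ^ n :=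
    calc R ≤ LiouvilleNumber.remainder 2 (k + 1) :=
          htail.tsum_le_tsum (fun i => indicator_le_self' (fun _ _ => by positivity) _)
            (LiouvilleNumber.remainder_summable one_lt_two _)
      _ < 1 / ((2 : ℝ) ^ (k + 1)!) ^ (k + 1) := LiouvilleNumber.remainder_lt _ le_rfl
      _ ≤ 1 / ((2 : ℝ) ^ (k + 1)!) ^ n := by
          gcongr
          · exact one_le_pow₀ one_le_two
          · omega
  refine ⟨p, 2 ^ (k + 1)!, one_lt_pow₀ one_lt_two (factorial_ne_zero _), ?_, ?_⟩
  · push_cast; rw [hsplit]; exact (lt_add_of_pos_right _ hR_pos).ne'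
  · push_cast; rwa [hsplit, add_sub_cancel_left, abs_of_pos hR_pos]

lemma liouvilleSum_mem_QunitSet_iff {S : Set ℕ} : liouvilleSum S ∈ QunitSet ↔ S.Finite := by
  refine ⟨fun ⟨_, q, hq⟩ => ?_, fun hS => ⟨liouvilleSum_mem_Icc S, hS.exists_rat_liouvilleSum_eq⟩⟩
  by_contra hS
  exact (Set.Infinite.liouville_liouvilleSum hS).irrational ⟨q, hq.symm⟩

lemma continuous_liouvilleSum_setOf_mem {X : Type*} [TopologicalSpace X] {C : ℕ → Set X}
    (hC : ∀ m, IsClopen (C m)) : Continuous fun x => liouvilleSum {m | x ∈ C m} :=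
  continuous_tsum (fun m => (hC m).continuous_indicator continuous_const)
    (summable_geometric_two' 1) fun m x => by
      rw [Real.norm_of_nonneg (liouvilleTerm_nonneg _ m)]
      exact liouvilleTerm_le _ m

end Liouville

section ClopenBasis

variable {X : Type*} [TopologicalSpace X]

lemma ZeroDimSpace.isTopologicalBasis_isClopen (h : ZeroDimSpace X) :
    IsTopologicalBasis {s : Set X | IsClopen s} :=
  let ⟨_, hB, hBclopen⟩ := h
  hB.of_isOpen_of_subset (fun _ hs => hs.isOpen) hBclopen

lemma Set.Countable.exists_isClopen_range_eq_insert_empty {B : Set (Set X)} (hB : B.Countable)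
    (hBclopen : B ⊆ {s | IsClopen s}) :
    ∃ u : ℕ → Set X, (∀ n, IsClopen (u n)) ∧ range u = insert ∅ B := by
  obtain ⟨u, hu⟩ := (hB.insert ∅).exists_eq_range (insert_nonempty _ _)
  refine ⟨u, fun n => ?_, hu.symm⟩
  rcases (hu ▸ mem_range_self n : u n ∈ insert ∅ B) with h | h
  · exact h ▸ isClopen_empty
  · exact hBclopen h

lemma isInducing_boolIndicator_of_isTopologicalBasis {ι : Type*} {u : ι → Set X}
    (hu : IsTopologicalBasis (range u)) (hclopen : ∀ i, IsClopen (u i)) :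
    IsInducing fun x i => (u i).boolIndicator x := by
  refine ⟨le_antisymm
    (continuous_pi fun i => (continuous_boolIndicator_iff_isClopen _).2 (hclopen i)).le_induced ?_⟩
  conv_rhs => rw [hu.eq_generateFrom]
  refine le_generateFrom ?_
  rintro _ ⟨i, rfl⟩
  rw [← preimage_boolIndicator_true (u i)]
  exact isOpen_induced ((isOpen_discrete {true}).preimage (continuous_apply i))

lemma exists_isEmbedding_cantor [T0Space X] [SecondCountableTopology X]
    (hX : IsTopologicalBasis {s : Set X | IsClopen s}) : ∃ e : X → ℕ → Bool, IsEmbedding e := by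
  obtain ⟨B, hBclopen, hBc, hB⟩ := hX.exists_countable
  obtain ⟨u, hu, hrange⟩ := hBc.exists_isClopen_range_eq_insert_empty hBclopen
  exact ⟨_, (isInducing_boolIndicator_of_isTopologicalBasis (hrange ▸ hB.insert_empty) hu).isEmbedding⟩

lemma IsOpen.exists_iUnion_isClopen_pairwise_disjoint [SecondCountableTopology X]
    (hX : IsTopologicalBasis {s : Set X | IsClopen s}) {W : Set X} (hW : IsOpen W) :
    ∃ D : ℕ → Set X, (∀ j, IsClopen (D j)) ∧ Pairwise (Disjoint on D) ∧ ⋃ j, D j = W := by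
  obtain ⟨B, hBclopen, hBc, rfl⟩ := hX.exists_countable_biUnion_of_isOpen hW
  obtain ⟨V, hV, hrange⟩ := hBc.exists_isClopen_range_eq_insert_empty hBclopen
  refine ⟨disjointed V, fun j => _root_.disjointedRec (fun t i ht => ht.diff (hV i)) (hV j),
    disjoint_disjointed V, ?_⟩
  rw [iUnion_disjointed, ← sUnion_range, hrange, sUnion_insert, empty_union, sUnion_eq_biUnion]

/-- Writing `F = ⋃ Kₙ`, the pieces `Cₘ` enumerate clopen partitions of the sets
`(K₀ ∪ ⋯ ∪ Kₙ)ᶜ`: a point of `K_k` meets at most one piece for each `n < k`, a point outside `F`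
one piece for every `n`. -/
lemma IsSigmaCompact.exists_isClopen_infinite_iff_notMem [T2Space X] [SecondCountableTopology X]
    (hX : IsTopologicalBasis {s : Set X | IsClopen s}) {F : Set X} (hF : IsSigmaCompact F) :
    ∃ C : ℕ → Set X, (∀ m, IsClopen (C m)) ∧ ∀ x, {m | x ∈ C m}.Infinite ↔ x ∉ F := by
  obtain ⟨K, hK, rfl⟩ := hF
  choose D hDclopen hDdisj hDunion using fun n =>
    (isCompact_accumulate hK n).isClosed.isOpen_compl.exists_iUnion_isClopen_pairwise_disjoint hX
  refine ⟨fun m => D m.unpair.1 m.unpair.2, fun m => hDclopen _ _, fun x => ?_⟩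
  have hpair : {m | x ∈ D m.unpair.1 m.unpair.2} = Nat.pairEquiv '' {p | x ∈ D p.1 p.2} :=
    (Nat.pairEquiv.image_eq_preimage_symm {p | x ∈ D p.1 p.2}).symm
  rw [hpair, infinite_image_iff Nat.pairEquiv.injective.injOn]
  constructor
  · rintro hinf hx
    obtain ⟨k, hk⟩ := mem_iUnion.1 hx
    refine hinf (Finite.of_finite_image (f := Prod.fst) ((finite_Iio k).subset ?_)
      fun p hp q hq hpq => ?_)
    · rintro _ ⟨p, hp, rfl⟩
      by_contra hkp
      have := hDunion p.1 ▸ mem_iUnion_of_mem p.2 hp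
      exact this (mem_accumulate.2 ⟨k, not_lt.1 hkp, hk⟩)
    · exact Prod.ext hpq ((hDdisj p.1).eq (not_disjoint_iff.2 ⟨x, hp, hpq ▸ hq⟩))
  · intro hx
    have hxW : ∀ n, x ∈ ⋃ j, D n j := fun n => (hDunion n).symm ▸ fun hxn =>
      hx (iUnion_accumulate (s := K) ▸ mem_iUnion_of_mem n hxn)
    choose j hj using fun n => mem_iUnion.1 (hxW n)
    exact infinite_of_injective_forall_mem (f := fun n => (n, j n))
      (fun a b hab => congrArg Prod.fst hab) hj

end ClopenBasis

lemma exists_isEmbedding_prod_isClosed_range {X Y Z : Type*} [TopologicalSpace X]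
    [TopologicalSpace Y] [TopologicalSpace Z] [T2Space Z] {e : X → Y} (he : IsEmbedding e)
    {g : Y → Z} (hg : Continuous g) {T : Set Z} (hT : g ⁻¹' T = range e) :
    ∃ h : X → Y × T, IsEmbedding h ∧ IsClosed (range h) := by
  have hmem : ∀ x, g (e x) ∈ T := fun x => (hT.symm ▸ mem_range_self x : e x ∈ g ⁻¹' T)
  refine ⟨fun x => (e x, ⟨g (e x), hmem x⟩), IsEmbedding.of_comp
    (he.continuous.prodMk ((hg.comp he.continuous).subtype_mk _)) continuous_fst he, ?_⟩
  have hgraph : range (fun x => (e x, (⟨g (e x), hmem x⟩ : T))) = {p : Y × T | g p.1 = p.2} := by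
    ext ⟨y, t⟩
    refine ⟨?_, fun hyt => ?_⟩
    · rintro ⟨x, hx⟩
      cases hx
      rfl
    · obtain ⟨x, rfl⟩ : y ∈ range e := hT ▸ (show g y ∈ T from hyt ▸ t.2)
      exact ⟨x, Prod.ext rfl (Subtype.ext hyt)⟩
  rw [hgraph]
  exact isClosed_eq (hg.comp continuous_fst) (continuous_subtype_val.comp continuous_snd)

theorem stmt_6_general (X : Type*) [TopologicalSpace X] [MetrizableSpace X]
    [SigmaCompactSpace X] (h0 : ZeroDimSpace X) :
    ∃ h : X → (ℕ → Bool) × ↥QunitSet, IsEmbedding h ∧ IsClosed (range h) := by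
  let := metrizableSpaceMetric X
  obtain ⟨e, he⟩ := exists_isEmbedding_cantor h0.isTopologicalBasis_isClopen
  obtain ⟨C, hC, hCinf⟩ :=
    (isSigmaCompact_range he.continuous).exists_isClopen_infinite_iff_notMem
      isTopologicalBasis_isClopen
  refine exists_isEmbedding_prod_isClosed_range he (continuous_liouvilleSum_setOf_mem hC) ?_
  ext y
  rw [mem_preimage, liouvilleSum_mem_QunitSet_iff, ← not_infinite, hCinf, not_not]

/-- Every zero-dimensional σ-compact separable metrizable space embeds onto a closed
subspace of `2^ℕ × ℚ`. -/
theorem stmt_6 (X : Type*) [TopologicalSpace X] [MetrizableSpace X] [SeparableSpace X]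
    [SigmaCompactSpace X] (h0 : ZeroDimSpace X) :
    ∃ h : X → (ℕ → Bool) × ↥QunitSet, IsEmbedding h ∧ IsClosed (range h) :=
  stmt_6_general X h0
end
end

section
/- Let X* be a compact metrizable space with dim X* ≤ 1, let E be a zero-dimensional Gδ-subset of X*, and let F̃ be a zero-dimensional σ-compact subset of X* disjoint from E. Then there exist a zero-dimensional σ-compact set C with F̃ ⊆ C ⊆ X* \ E, and Gδ-sets G₁, G₂, … in X* such that X* \ C = ⋃_i G_i and E ∪ G_i is zero-dimensional for every i. -/
open Topology TopologicalSpace Set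

noncomputable section

/-! Since `dim X ≤ 1`, `X` has a countable base `𝒱` of open sets with zero-dimensional
boundaries; off `N = ⋃_{V ∈ 𝒱} ∂V` every basic set is clopen, so `X \ N` is zero-dimensional.
Write `E = ⋂ᵢ Oᵢ` with `Oᵢ` open and let `C` be `F̃` together with all the compact sets
`∂V \ Oᵢ`: a countable union of closed zero-dimensional sets, hence zero-dimensional, and
disjoint from `E`. Put `Gᵢ = E ∪ ((X \ C) \ Oᵢ)`. Then `Gᵢ ∩ Oᵢ = E` and `Gᵢ \ Oᵢ ⊆ X \ N`,
since a point of `N \ Oᵢ` lies in `C`; both parts are zero-dimensional, and as `Oᵢ` is an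
`Fσ`-set the countable closed sum theorem makes `Gᵢ` zero-dimensional. -/

section ZeroDim

variable {Y Y' : Type*} [TopologicalSpace Y] [TopologicalSpace Y']

lemma ZeroDimSpace.of_isInducing {f : Y → Y'} (hf : IsInducing f) (h : ZeroDimSpace Y') :
    ZeroDimSpace Y := by
  obtain ⟨ℬ, hℬ, hℬc⟩ := h
  refine ⟨preimage f '' ℬ, hℬ.isInducing hf, ?_⟩
  rintro _ ⟨K, hK, rfl⟩
  exact (hℬc K hK).preimage hf.continuous

lemma ZeroDimSpace.of_isEmpty [IsEmpty Y] : ZeroDimSpace Y :=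
  ⟨∅, isTopologicalBasis_of_isOpen_of_nhds (by simp) fun x => isEmptyElim x, by simp⟩

lemma zeroDimSet_empty : ZeroDimSet (∅ : Set Y) :=
  ZeroDimSpace.of_isEmpty

lemma ZeroDimSet.mono {S T : Set Y} (h : ZeroDimSet T) (hST : S ⊆ T) : ZeroDimSet S :=
  ZeroDimSpace.of_isInducing (IsInducing.subtypeVal.of_comp_iff.1 IsInducing.subtypeVal
    : IsInducing (inclusion hST)) h

lemma ZeroDimSet.preimage_val {S T : Set Y} (h : ZeroDimSet T) :
    ZeroDimSet (Subtype.val ⁻¹' T : Set S) := by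
  have hval : IsInducing
      ((Subtype.val : S → Y) ∘ (Subtype.val : (Subtype.val ⁻¹' T : Set S) → S)) :=
    IsInducing.subtypeVal.comp IsInducing.subtypeVal
  exact ZeroDimSpace.of_isInducing (f := fun z => (⟨z.1.1, z.2⟩ : T))
    (IsInducing.subtypeVal.of_comp_iff.1 hval) h

lemma TopologicalSpace.IsTopologicalBasis.zeroDimSet_of_disjoint_frontier {ℬ : Set (Set Y)}
    {S : Set Y} (hℬ : IsTopologicalBasis ℬ) (hS : ∀ V ∈ ℬ, Disjoint S (frontier V)) :
    ZeroDimSet S := by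
  refine ⟨preimage Subtype.val '' ℬ, hℬ.isInducing IsInducing.subtypeVal, ?_⟩
  rintro _ ⟨V, hV, rfl⟩
  have hVo : IsOpen V := hℬ.isOpen hV
  have hclosure : (Subtype.val ⁻¹' closure V : Set S) ⊆ Subtype.val ⁻¹' V := fun z hz =>
    by_contra fun hzV => (hS V hV).notMem_of_mem_left z.2 (hVo.frontier_eq ▸ ⟨hz, hzV⟩)
  refine ⟨?_, hVo.preimage continuous_subtype_val⟩
  rw [(preimage_mono subset_closure).antisymm hclosure]
  exact isClosed_closure.preimage continuous_subtype_val

end ZeroDim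

lemma exists_nat_iUnion_eq_iUnion {α ι : Type*} [Countable ι] {p : Set α → Prop} {f : ι → Set α}
    (h₀ : p ∅) (hf : ∀ i, p (f i)) : ∃ g : ℕ → Set α, (∀ n, p (g n)) ∧ ⋃ n, g n = ⋃ i, f i := by
  have := Encodable.ofCountable ι
  exact ⟨fun n => ⋃ i ∈ Encodable.decode₂ ι n, f i,
    fun _ => Encodable.iUnion_decode₂_cases (C := p) h₀ hf, Encodable.iUnion_decode₂ f⟩

def StronglyZeroDimSpace (Y : Type*) [TopologicalSpace Y] : Prop :=
  ∀ A B : Set Y, IsClosed A → IsClosed B → Disjoint A B →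
    ∃ K, IsClopen K ∧ A ⊆ K ∧ Disjoint K B

section StronglyZeroDim

variable {Y : Type*} [TopologicalSpace Y]

lemma StronglyZeroDimSpace.zeroDimSpace [T1Space Y] (h : StronglyZeroDimSpace Y) :
    ZeroDimSpace Y := by
  refine ⟨{K | IsClopen K}, isTopologicalBasis_of_isOpen_of_nhds (fun K hK => hK.isOpen) ?_,
    fun K hK => hK⟩
  intro x U hxU hU
  obtain ⟨K, hK, hxK, hKU⟩ := h {x} Uᶜ isClosed_singleton hU.isClosed_compl
    (disjoint_singleton_left.2 (notMem_compl_iff.2 hxU))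
  exact ⟨K, hK, singleton_subset_iff.1 hxK, disjoint_compl_right_iff_subset.1 hKU⟩

/-- Disjointify a countable clopen cover whose members each miss `A` or `B`, and collect the
pieces that miss `B`. -/
lemma ZeroDimSpace.stronglyZeroDimSpace [LindelofSpace Y] (h : ZeroDimSpace Y) :
    StronglyZeroDimSpace Y := by
  obtain ⟨ℬ, hℬ, hℬc⟩ := h
  intro A B hA hB hAB
  have hlocal : ∀ x, ∃ K, IsClopen K ∧ x ∈ K ∧ (Disjoint K A ∨ Disjoint K B) := by
    intro x
    by_cases hx : x ∈ A
    · obtain ⟨K, hK, hxK, hKB⟩ :=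
        hℬ.exists_subset_of_mem_open (hAB.notMem_of_mem_left hx) hB.isOpen_compl
      exact ⟨K, hℬc K hK, hxK, Or.inr (subset_compl_iff_disjoint_right.1 hKB)⟩
    · obtain ⟨K, hK, hxK, hKA⟩ := hℬ.exists_subset_of_mem_open hx hA.isOpen_compl
      exact ⟨K, hℬc K hK, hxK, Or.inl (subset_compl_iff_disjoint_right.1 hKA)⟩
  choose K hK hxK hKAB using hlocal
  obtain ⟨t, htc, ht⟩ :=
    LindelofSpace.elim_nhds_subcover K fun x => (hK x).isOpen.mem_nhds (hxK x)
  have := htc.to_subtype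
  obtain ⟨L, hL, hLt⟩ := exists_nat_iUnion_eq_iUnion
    (p := fun s => IsClopen s ∧ (Disjoint s A ∨ Disjoint s B)) (f := fun x : t => K x)
    ⟨isClopen_empty, Or.inl (empty_disjoint _)⟩ fun x => ⟨hK x, hKAB x⟩
  have hD : ∀ n, IsOpen (disjointed L n) :=
    fun n => disjointedRec (fun s i hs => hs.sdiff (hL i).1.isClosed) (hL n).1.isOpen
  set U := ⋃ n, ⋃ (_ : Disjoint (L n) B), disjointed L n
  set W := ⋃ n, ⋃ (_ : ¬Disjoint (L n) B), disjointed L n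
  have hUW : Disjoint U W := by
    simp only [U, W, disjoint_iUnion_left, disjoint_iUnion_right]
    intro j hjB i hiB
    exact disjoint_disjointed L (show i ≠ j by rintro rfl; exact hjB hiB)
  have hcover : univ ⊆ U ∪ W := by
    intro x _
    obtain ⟨n, hn⟩ : ∃ n, x ∈ disjointed L n := by
      rw [← mem_iUnion, iUnion_disjointed, hLt, iUnion_subtype, ht]
      trivial
    by_cases hnB : Disjoint (L n) B
    · exact Or.inl (mem_iUnion₂.2 ⟨n, hnB, hn⟩)
    · exact Or.inr (mem_iUnion₂.2 ⟨n, hnB, hn⟩)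
  have hWA : Disjoint W A := by
    simp only [W, disjoint_iUnion_left]
    exact fun n hn => ((hL n).2.resolve_right hn).mono_left (disjointed_subset L n)
  refine ⟨U, isClopen_of_disjoint_cover_open hcover (isOpen_biUnion fun n _ => hD n)
    (isOpen_biUnion fun n _ => hD n) hUW, fun x hx => ?_, ?_⟩
  · exact (hcover trivial).resolve_right (hWA.notMem_of_mem_right hx)
  · simp only [U, disjoint_iUnion_left]
    exact fun n hn => hn.mono_left (disjointed_subset L n)

end StronglyZeroDim

section SumTheorem

variable {Y : Type*} [TopologicalSpace Y]

lemma exists_isClosed_disjoint_cover_of_stronglyZeroDimSpace [NormalSpace Y] {F C₁ C₂ : Set Y}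
    (hF : IsClosed F) (hFz : StronglyZeroDimSpace F) (h₁ : IsClosed C₁) (h₂ : IsClosed C₂)
    (h : Disjoint C₁ C₂) :
    ∃ D₁ D₂, IsClosed D₁ ∧ IsClosed D₂ ∧ Disjoint D₁ D₂ ∧ C₁ ⊆ interior D₁ ∧
      C₂ ⊆ interior D₂ ∧ F ⊆ D₁ ∪ D₂ := by
  obtain ⟨K, hK, hCK, hKC⟩ := hFz (Subtype.val ⁻¹' C₁) (Subtype.val ⁻¹' C₂)
    (h₁.preimage continuous_subtype_val) (h₂.preimage continuous_subtype_val)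
    (h.preimage Subtype.val)
  have hval := hF.isClosedEmbedding_subtypeVal
  set Q₁ := C₁ ∪ Subtype.val '' K
  set Q₂ := C₂ ∪ Subtype.val '' Kᶜ
  have hQ₁ : IsClosed Q₁ := h₁.union (hval.isClosedMap K hK.isClosed)
  have hQ₂ : IsClosed Q₂ := h₂.union (hval.isClosedMap _ hK.isOpen.isClosed_compl)
  have hQ : Disjoint Q₁ Q₂ := by
    refine disjoint_union_left.2 ⟨disjoint_union_right.2 ⟨h, ?_⟩, disjoint_union_right.2 ⟨?_, ?_⟩⟩
    · rw [disjoint_left]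
      rintro _ hy ⟨z, hz, rfl⟩
      exact hz (hCK hy)
    · rw [disjoint_left]
      rintro _ ⟨z, hz, rfl⟩ hy
      exact hKC.notMem_of_mem_left hz hy
    · exact (disjoint_image_iff Subtype.val_injective).2 disjoint_compl_right
  obtain ⟨u, hu, hQu, hu₂⟩ := normal_exists_closure_subset hQ₁ hQ₂.isOpen_compl
    (subset_compl_iff_disjoint_right.2 hQ)
  obtain ⟨w, hw, hQw, hw₁⟩ := normal_exists_closure_subset hQ₂ isClosed_closure.isOpen_compl
    (subset_compl_iff_disjoint_right.2 (subset_compl_iff_disjoint_right.1 hu₂).symm)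
  refine ⟨closure u, closure w, isClosed_closure, isClosed_closure,
    (subset_compl_iff_disjoint_right.1 hw₁).symm,
    (subset_union_left.trans hQu).trans hu.subset_interior_closure,
    (subset_union_left.trans hQw).trans hw.subset_interior_closure, ?_⟩
  intro y hy
  by_cases hyK : (⟨y, hy⟩ : F) ∈ K
  · exact Or.inl (subset_closure (hQu (Or.inr ⟨_, hyK, rfl⟩)))
  · exact Or.inr (subset_closure (hQw (Or.inr ⟨_, hyK, rfl⟩)))

/-- The sets separating `A` from `B` are grown in countably many steps, the `n`-th step
absorbing `F n`. -/
lemma StronglyZeroDimSpace.of_iUnion_isClosed [NormalSpace Y] (F : ℕ → Set Y)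
    (hF : ∀ n, IsClosed (F n)) (hFz : ∀ n, StronglyZeroDimSpace (F n)) (hcov : ⋃ n, F n = univ) :
    StronglyZeroDimSpace Y := by
  intro A B hA hB hAB
  let Pair := {p : Set Y × Set Y // IsClosed p.1 ∧ IsClosed p.2 ∧ Disjoint p.1 p.2}
  have hstep : ∀ n (p : Pair), ∃ q : Pair,
      p.1.1 ⊆ interior q.1.1 ∧ p.1.2 ⊆ interior q.1.2 ∧ F n ⊆ q.1.1 ∪ q.1.2 := by
    rintro n ⟨⟨C₁, C₂⟩, h₁, h₂, h⟩
    obtain ⟨D₁, D₂, hD₁, hD₂, hD, hCD₁, hCD₂, hFD⟩ :=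
      exists_isClosed_disjoint_cover_of_stronglyZeroDimSpace (hF n) (hFz n) h₁ h₂ h
    exact ⟨⟨(D₁, D₂), hD₁, hD₂, hD⟩, hCD₁, hCD₂, hFD⟩
  choose next hnext using hstep
  let P : ℕ → Pair := fun n => Nat.rec (motive := fun _ => Pair) ⟨(A, B), hA, hB, hAB⟩ next n
  have hP : ∀ n, (P n).1.1 ⊆ interior (P (n + 1)).1.1 ∧ (P n).1.2 ⊆ interior (P (n + 1)).1.2 ∧
      F n ⊆ (P (n + 1)).1.1 ∪ (P (n + 1)).1.2 := fun n => hnext n (P n)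
  have hmono₁ : Monotone fun n => (P n).1.1 :=
    monotone_nat_of_le_succ fun n => (hP n).1.trans interior_subset
  have hmono₂ : Monotone fun n => (P n).1.2 :=
    monotone_nat_of_le_succ fun n => (hP n).2.1.trans interior_subset
  set U := ⋃ n, interior (P n).1.1
  set W := ⋃ n, interior (P n).1.2
  have hUW : Disjoint U W := by
    simp only [U, W, disjoint_iUnion_left, disjoint_iUnion_right]
    intro j i
    exact (P (max i j)).2.2.2.mono (interior_subset.trans (hmono₁ (le_max_left i j)))
      (interior_subset.trans (hmono₂ (le_max_right i j)))
  have hcover : univ ⊆ U ∪ W := by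
    rw [← hcov]
    refine iUnion_subset fun n y hy => ?_
    rcases (hP n).2.2 hy with hy | hy
    · exact Or.inl (mem_iUnion.2 ⟨n + 2, (hP (n + 1)).1 hy⟩)
    · exact Or.inr (mem_iUnion.2 ⟨n + 2, (hP (n + 1)).2.1 hy⟩)
  refine ⟨U, isClopen_of_disjoint_cover_open hcover (isOpen_iUnion fun n => isOpen_interior)
    (isOpen_iUnion fun n => isOpen_interior) hUW,
    (hP 0).1.trans (subset_iUnion (fun n => interior (P n).1.1) 1), ?_⟩
  exact hUW.mono_right ((hP 0).2.1.trans (subset_iUnion (fun n => interior (P n).1.2) 1))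

end SumTheorem

section SubsetSumTheorem

variable {Y : Type*} [TopologicalSpace Y] [MetrizableSpace Y] [SecondCountableTopology Y]

lemma ZeroDimSet.of_subset_iUnion_isClosed {ι : Type*} [Countable ι] {S : Set Y}
    (F : ι → Set Y) (hF : ∀ i, IsClosed (F i)) (hFz : ∀ i, ZeroDimSet (S ∩ F i))
    (hS : S ⊆ ⋃ i, F i) : ZeroDimSet S := by
  obtain ⟨F', hF', hF'F⟩ := exists_nat_iUnion_eq_iUnion
    (p := fun s => IsClosed s ∧ ZeroDimSet (S ∩ s))
    ⟨isClosed_empty, by simpa using zeroDimSet_empty⟩ fun i => ⟨hF i, hFz i⟩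
  refine StronglyZeroDimSpace.zeroDimSpace <| StronglyZeroDimSpace.of_iUnion_isClosed
    (fun n => Subtype.val ⁻¹' F' n) (fun n => (hF' n).1.preimage continuous_subtype_val)
    (fun n => ZeroDimSpace.stronglyZeroDimSpace ?_) ?_
  · have h := (hF' n).2.preimage_val (S := S)
    rwa [Subtype.preimage_coe_self_inter] at h
  · rw [← preimage_iUnion, hF'F]
    exact eq_univ_of_forall fun z => hS z.2

lemma ZeroDimSet.iUnion_of_isClosed {ι : Type*} [Countable ι] (F : ι → Set Y)
    (hF : ∀ i, IsClosed (F i)) (hFz : ∀ i, ZeroDimSet (F i)) : ZeroDimSet (⋃ i, F i) :=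
  .of_subset_iUnion_isClosed F hF
    (fun i => by rw [inter_eq_right.2 (subset_iUnion F i)]; exact hFz i) subset_rfl

lemma ZeroDimSet.of_inter_of_diff {S O : Set Y} (hO : IsOpen O) (h₁ : ZeroDimSet (S ∩ O))
    (h₂ : ZeroDimSet (S \ O)) : ZeroDimSet S := by
  obtain ⟨U, hU, hUO⟩ := hO.isClosed_compl.isGδ.eq_iInter_nat
  have hO' : O = ⋃ n, (U n)ᶜ := by rw [← compl_iInter, ← hUO, compl_compl]
  have hUO' : ∀ n, (U n)ᶜ ⊆ O := by
    rw [hO']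
    exact subset_iUnion fun n => (U n)ᶜ
  refine .of_subset_iUnion_isClosed (fun o : Option ℕ => o.elim Oᶜ fun n => (U n)ᶜ)
    (fun o => ?_) (fun o => ?_) fun x _ => ?_
  · cases o with
    | none => exact hO.isClosed_compl
    | some n => exact (hU n).isClosed_compl
  · cases o with
    | none => exact h₂
    | some n => exact h₁.mono (inter_subset_inter_right S (hUO' n))
  · by_cases hx : x ∈ O
    · obtain ⟨n, hn⟩ := mem_iUnion.1 (hO' ▸ hx)
      exact mem_iUnion.2 ⟨some n, hn⟩
    · exact mem_iUnion.2 ⟨none, hx⟩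

lemma ZeroDimSet.union_diff {E M O : Set Y} (hO : IsOpen O) (hEO : E ⊆ O) (hE : ZeroDimSet E)
    (hM : ZeroDimSet M) : ZeroDimSet (E ∪ (M \ O)) := by
  refine .of_inter_of_diff hO (hE.mono ?_) (hM.mono ?_)
  · rintro x ⟨hx | hx, hxO⟩
    exacts [hx, absurd hxO hx.2]
  · rintro x ⟨hx | hx, hxO⟩
    exacts [absurd (hEO hx) hxO, hx.1]

end SubsetSumTheorem

lemma Set.compl_eq_iUnion_iInter_union_diff {α ι : Type*} [Nonempty ι] {C : Set α}
    {O : ι → Set α} (h : Disjoint C (⋂ i, O i)) : Cᶜ = ⋃ i, (⋂ j, O j) ∪ (Cᶜ \ O i) := by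
  refine subset_antisymm (fun x hxC => ?_) (iUnion_subset fun i =>
    union_subset (subset_compl_iff_disjoint_left.2 h) sdiff_subset)
  by_cases hxO : x ∈ ⋂ i, O i
  · exact mem_iUnion.2 ⟨Classical.arbitrary ι, .inl hxO⟩
  · obtain ⟨i, hi⟩ := not_forall.1 (mt mem_iInter.2 hxO)
    exact mem_iUnion.2 ⟨i, .inr ⟨hxC, hi⟩⟩

lemma DimLeOne.exists_countable_basis {X : Type*} [TopologicalSpace X] [SecondCountableTopology X]
    (h : DimLeOne X) :
    ∃ 𝒱 : Set (Set X), 𝒱.Countable ∧ IsTopologicalBasis 𝒱 ∧ ∀ V ∈ 𝒱, ZeroDimSet (frontier V) := by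
  have hbasis : IsTopologicalBasis {V : Set X | IsOpen V ∧ ZeroDimSet (frontier V)} := by
    refine isTopologicalBasis_of_isOpen_of_nhds (fun V hV => hV.1) fun x U hxU hU => ?_
    obtain ⟨V, hV, hxV, hVU, hfr⟩ := h x U hU hxU
    exact ⟨V, ⟨hV, hfr.elim (fun h => h ▸ zeroDimSet_empty) id⟩, hxV, hVU⟩
  obtain ⟨𝒱, h𝒱, h𝒱c, h𝒱b⟩ := hbasis.exists_countable
  exact ⟨𝒱, h𝒱c, h𝒱b, fun V hV => (h𝒱 hV).2⟩

/-- The enlargement step in the proof of Theorem 1.2: in a compact metrizable `X*` with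
`dim X* ≤ 1`, given a zero-dimensional `Gδ`-set `E` and a disjoint zero-dimensional
σ-compact set `F̃`, there is a zero-dimensional σ-compact `C` with `F̃ ⊆ C ⊆ X* \ E`
and `Gδ`-sets `Gᵢ` with `X* \ C = ⋃ᵢ Gᵢ` and each `E ∪ Gᵢ` zero-dimensional. -/
theorem stmt_9 (X : Type*) [TopologicalSpace X] [CompactSpace X] [MetrizableSpace X]
    (hdim : DimLeOne X) (E Ftilde : Set X)
    (hE0 : ZeroDimSet E) (hEGδ : IsGδ E)
    (hF0 : ZeroDimSet Ftilde) (hFσ : IsSigmaCompact Ftilde)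
    (hdisj : Disjoint Ftilde E) :
    ∃ C : Set X, IsSigmaCompact C ∧ ZeroDimSet C ∧ Ftilde ⊆ C ∧ C ⊆ univ \ E ∧
      ∃ G : ℕ → Set X, (∀ i, IsGδ (G i)) ∧ univ \ C = ⋃ i, G i ∧
        ∀ i, ZeroDimSet (E ∪ G i) := by
  obtain ⟨𝒱, h𝒱c, h𝒱, h𝒱z⟩ := hdim.exists_countable_basis
  have := h𝒱c.to_subtype
  have hN : ZeroDimSet (⋃ V ∈ 𝒱, frontier V)ᶜ := h𝒱.zeroDimSet_of_disjoint_frontier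
    fun V hV => disjoint_compl_left_iff_subset.2 (subset_biUnion_of_mem hV)
  obtain ⟨O, hO, rfl⟩ := hEGδ.eq_iInter_nat
  obtain ⟨K, hK, rfl⟩ := hFσ
  let piece : ℕ ⊕ 𝒱 × ℕ → Set X := Sum.elim K fun p => frontier (p.1 : Set X) \ O p.2
  have hpiece : ∀ j, IsClosed (piece j)
    | .inl k => (hK k).isClosed
    | .inr p => isClosed_frontier.sdiff (hO p.2)
  have hpieceE : ∀ j, Disjoint (piece j) (⋂ i, O i)
    | .inl k => hdisj.mono_left (subset_iUnion K k)
    | .inr p => disjoint_left.2 fun _ hx hxO => hx.2 (mem_iInter.1 hxO p.2)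
  set C := ⋃ j, piece j
  have hCE : Disjoint C (⋂ i, O i) := disjoint_iUnion_left.2 hpieceE
  refine ⟨C, isSigmaCompact_iUnion_of_isCompact _ fun j => (hpiece j).isCompact,
    .iUnion_of_isClosed piece hpiece ?_, iUnion_subset fun k => subset_iUnion piece (.inl k),
    fun x hx => ⟨trivial, hCE.notMem_of_mem_left hx⟩, fun i => (⋂ i, O i) ∪ (Cᶜ \ O i),
    fun i => ?_, ?_, fun i => ?_⟩
  · rintro (k | ⟨⟨V, hV⟩, i⟩)
    · exact hF0.mono (subset_iUnion K k)
    · exact (h𝒱z V hV).mono sdiff_subset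
  · rw [compl_iUnion]
    exact hEGδ.union ((IsGδ.iInter_of_isOpen fun j => (hpiece j).isOpen_compl).inter
      (hO i).isClosed_compl.isGδ)
  · rw [← compl_eq_univ_sdiff]
    exact compl_eq_iUnion_iInter_union_diff hCE
  · rw [← union_assoc, union_self]
    refine (ZeroDimSet.union_diff (hO i) (iInter_subset O i) hE0 hN).mono
      (union_subset_union_right _ fun x ⟨hxC, hxO⟩ => ⟨?_, hxO⟩)
    simp only [mem_compl_iff, mem_iUnion, not_exists]
    exact fun V hV hxV => hxC (mem_iUnion.2 ⟨.inr (⟨V, hV⟩, i), hxV, hxO⟩)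
end
end

section
/- Let H = {x ∈ I^ℕ : for every k ∈ ℕ there exists l ∈ ℕ with x(2^k·3^l) = 0}. Then H is an Fσδ-set in the Hilbert cube I^ℕ, and for every compact metrizable space X and every Fσδ-subset A of X there exists a topological embedding h : X → I^ℕ with A = h⁻¹(H). -/
open Topology TopologicalSpace Set

noncomputable section

/-! In a perfectly normal space every closed set is the zero set of a map into `I`. Writing
`A = ⋂ k, ⋃ l, F k l`, let `h x` have as coordinate `2^k 3^l` such a zero-set function of `F k l`;
then `h⁻¹(H) = A` by construction. The coordinates `5 m`, never of the form `2^k 3^l`, are left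
free for zero-set functions of a countable family of closed sets separating points, which makes
`h` injective and hence, `X` being compact, an embedding. -/

theorem two_pow_mul_three_pow_injective :
    Function.Injective fun p : ℕ × ℕ => 2 ^ p.1 * 3 ^ p.2 := by
  have factorization_two_three (k l : ℕ) :
      (2 ^ k * 3 ^ l).factorization 2 = k ∧ (2 ^ k * 3 ^ l).factorization 3 = l := by
    rw [Nat.factorization_mul (by positivity) (by positivity),
      Nat.prime_two.factorization_pow, Nat.prime_three.factorization_pow]
    simp
  rintro ⟨k, l⟩ ⟨k', l'⟩ (h : 2 ^ k * 3 ^ l = 2 ^ k' * 3 ^ l')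
  obtain ⟨hk, hl⟩ := factorization_two_three k l
  obtain ⟨hk', hl'⟩ := factorization_two_three k' l'
  exact Prod.ext (hk.symm.trans (h ▸ hk')) (hl.symm.trans (h ▸ hl'))

theorem two_pow_mul_three_pow_ne_five_mul (k l m : ℕ) : 2 ^ k * 3 ^ l ≠ 5 * m := by
  intro h
  have hcop : Nat.Coprime 5 (2 ^ k * 3 ^ l) :=
    .mul_right (.pow_right _ (by norm_num)) (.pow_right _ (by norm_num))
  exact absurd (hcop.eq_one_of_dvd ⟨m, h⟩) (by norm_num)

theorem exists_seq_interleave_two_pow_mul_three_pow {α : Type*} (F : ℕ → ℕ → α) (C : ℕ → α) :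
    ∃ G : ℕ → α, (∀ k l, G (2 ^ k * 3 ^ l) = F k l) ∧ (∀ m, G (5 * m) = C m) ∧
      ∀ n, (∃ k l, G n = F k l) ∨ ∃ m, G n = C m := by
  let p : ℕ × ℕ → ℕ := fun p => 2 ^ p.1 * 3 ^ p.2
  refine ⟨Function.extend p (fun p => F p.1 p.2) (fun n => C (n / 5)),
    fun k l => two_pow_mul_three_pow_injective.extend_apply _ _ (k, l), fun m => ?_, fun n => ?_⟩
  · rw [Function.extend_apply']
    · simp
    · rintro ⟨⟨k, l⟩, h⟩
      exact two_pow_mul_three_pow_ne_five_mul k l m h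
  · by_cases hn : ∃ q, p q = n
    · obtain ⟨⟨k, l⟩, rfl⟩ := hn
      exact .inl ⟨k, l, two_pow_mul_three_pow_injective.extend_apply _ _ (k, l)⟩
    · exact .inr ⟨n / 5, Function.extend_apply' _ _ _ hn⟩

theorem IsClosed.exists_continuous_unitInterval_zero_iff {X : Type*} [TopologicalSpace X]
    [PerfectlyNormalSpace X] {s : Set X} (hs : IsClosed s) :
    ∃ f : X → unitInterval, Continuous f ∧ ∀ x, f x = 0 ↔ x ∈ s := by
  obtain ⟨f, rfl, hf01⟩ := perfectlyNormalSpace_iff_forall_isClosed_preimage_zero.1 ‹_› s hs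
  exact ⟨fun x => ⟨f x, hf01 x⟩, by fun_prop, fun _ => Set.Icc.coe_eq_zero.symm⟩

theorem exists_continuous_pi_unitInterval_zero_iff {X ι : Type*} [TopologicalSpace X]
    [PerfectlyNormalSpace X] {G : ι → Set X} (hG : ∀ i, IsClosed (G i)) :
    ∃ h : X → ι → unitInterval, Continuous h ∧ ∀ x i, h x i = 0 ↔ x ∈ G i := by
  choose f hf hf0 using fun i => (hG i).exists_continuous_unitInterval_zero_iff
  exact ⟨fun x i => f i x, continuous_pi hf, fun x i => hf0 i x⟩

theorem exists_isEmbedding_hilbertCube_zero_iff {X : Type*} [TopologicalSpace X]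
    [CompactSpace X] [PerfectlyNormalSpace X] {G : ℕ → Set X} (hG : ∀ n, IsClosed (G n))
    (hsep : ∀ x y, x ≠ y → ∃ n, x ∈ G n ∧ y ∉ G n) :
    ∃ h : X → HilbertCube, IsEmbedding h ∧ ∀ x n, h x n = 0 ↔ x ∈ G n := by
  obtain ⟨h, hcont, hzero⟩ := exists_continuous_pi_unitInterval_zero_iff hG
  have hinj : Function.Injective h := by
    intro x y hxy
    by_contra hne
    obtain ⟨n, hx, hy⟩ := hsep x y hne
    rw [← hzero, hxy, hzero] at hx
    exact hy hx
  exact ⟨h, (hcont.isClosedEmbedding hinj).isEmbedding, hzero⟩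

theorem exists_isClosed_seq_separating {X : Type*} [TopologicalSpace X]
    [SecondCountableTopology X] [T1Space X] :
    ∃ C : ℕ → Set X, (∀ n, IsClosed (C n)) ∧ ∀ x y, x ≠ y → ∃ n, x ∈ C n ∧ y ∉ C n := by
  -- `∅` is added so that the family can be enumerated even when `X` is empty.
  obtain ⟨U, hU⟩ := ((countable_countableBasis X).insert ∅).exists_eq_range
    (Set.insert_nonempty _ _)
  have hUopen (n : ℕ) : IsOpen (U n) := by
    rcases (hU ▸ Set.mem_range_self n : U n ∈ insert ∅ (countableBasis X)) with h | h
    · simp [h]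
    · exact isOpen_of_mem_countableBasis h
  refine ⟨fun n => (U n)ᶜ, fun n => (hUopen n).isClosed_compl, fun x y hxy => ?_⟩
  obtain ⟨V, hV, hyV, hVx⟩ := (isBasis_countableBasis X).exists_subset_of_mem_open
    (Set.mem_compl_singleton_iff.2 hxy.symm) isOpen_compl_singleton
  obtain ⟨n, rfl⟩ : V ∈ Set.range U := hU ▸ Set.mem_insert_of_mem _ hV
  exact ⟨n, fun hx => hVx hx rfl, not_not.2 hyV⟩

theorem isFσδ_hset : IsFσδ Hset :=
  ⟨fun k l => {x | (x (2 ^ k * 3 ^ l) : ℝ) = 0},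
    fun _ _ => isClosed_eq (by fun_prop) continuous_const, by ext; simp [Hset]⟩

/-- `H` is an `Fσδ` set in the Hilbert cube, and for every `Fσδ` set `A` in a compact
metrizable space `X` there is an embedding `h : X → I^ℕ` with `A = h⁻¹(H)`. -/
theorem stmt_10 : IsFσδ Hset ∧
    ∀ (X : Type) [TopologicalSpace X] [CompactSpace X] [MetrizableSpace X]
      (A : Set X), IsFσδ A →
      ∃ h : X → HilbertCube, IsEmbedding h ∧ A = h ⁻¹' Hset := by
  refine ⟨isFσδ_hset, fun X _ _ _ A ⟨F, hF, hFA⟩ => ?_⟩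
  obtain ⟨C, hC, hCsep⟩ := exists_isClosed_seq_separating (X := X)
  obtain ⟨G, hG23, hG5, hGcases⟩ := exists_seq_interleave_two_pow_mul_three_pow F C
  have hG (n : ℕ) : IsClosed (G n) := by
    obtain ⟨k, l, h⟩ | ⟨m, h⟩ := hGcases n <;> rw [h]
    exacts [hF k l, hC m]
  have hGsep (x y : X) (hxy : x ≠ y) : ∃ n, x ∈ G n ∧ y ∉ G n := by
    obtain ⟨m, hx, hy⟩ := hCsep x y hxy
    exact ⟨5 * m, hG5 m ▸ hx, hG5 m ▸ hy⟩
  obtain ⟨h, hemb, hzero⟩ := exists_isEmbedding_hilbertCube_zero_iff hG hGsep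
  refine ⟨h, hemb, ?_⟩
  ext x
  simp [hFA, Hset, Set.Icc.coe_eq_zero, hzero, hG23]
end
end

section
/- Let S = {0} ∪ {1/n : n ∈ ℕ, n ≥ 1} ⊆ [0,1] and let H = {x ∈ I^ℕ : for every k ∈ ℕ there exists l ∈ ℕ with x(2^k·3^l) = 0}. For every compact zero-dimensional metrizable space X and every Fσδ-subset A of X there exists a topological embedding h : X → S^ℕ ⊆ I^ℕ with A = h⁻¹(H). -/
/-!
Each closed set `F` of a compact metrizable zero-dimensional space is a countable intersection
of clopen sets `D n`, so `x ↦ 1 / (n + 1)`, with `n` the first index such that `x ∉ D n`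
(and `x ↦ 0` on `F`), is a continuous map into `S` whose zero set is exactly `F`.
Writing `A = ⋂ k, ⋃ l, F k l`, put the code of `F k l` in coordinate `2 ^ k * 3 ^ l`; then
`x ∈ A` iff `h x ∈ H`. The coordinates `5 * n` carry the indicators of a countable family
of clopen sets separating points, which makes `h` injective, hence an embedding by compactness.
-/

open Topology TopologicalSpace Set

noncomputable section

/-- `S = {0, 1, 1/2, 1/3, …} ⊆ [0,1]`, the convergent sequence space. -/
def SeqSet : Set ℝ := {x | x = 0 ∨ ∃ n : ℕ, 0 < n ∧ x = 1 / (n : ℝ)}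

lemma zero_mem_seqSet : (0 : ℝ) ∈ SeqSet := Or.inl rfl

lemma one_div_succ_mem_seqSet (n : ℕ) : 1 / (n + 1 : ℝ) ∈ SeqSet :=
  Or.inr ⟨n + 1, n.succ_pos, by push_cast; rfl⟩

lemma one_mem_seqSet : (1 : ℝ) ∈ SeqSet := by
  simpa using one_div_succ_mem_seqSet 0

lemma seqSet_subset_unitInterval : SeqSet ⊆ unitInterval := by
  rintro x (rfl | ⟨n, hn, rfl⟩)
  · exact unitInterval.zero_mem
  · exact ⟨by positivity, div_le_one_of_le₀ (by exact_mod_cast hn) (by positivity)⟩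

lemma Function.extend_mem {α β γ : Type*} {f : α → β} {g : α → γ} {e' : β → γ} {s : Set γ}
    (hg : ∀ a, g a ∈ s) (he : ∀ b, e' b ∈ s) (b : β) : Function.extend f g e' b ∈ s := by
  classical
  rw [Function.extend_def]
  split_ifs
  exacts [hg _, he _]

section ExitCode

variable {X : Type*} {D : ℕ → Set X}

open Classical

def exitCode (D : ℕ → Set X) (x : X) : ℝ :=
  if h : ∃ n, x ∉ D n then 1 / (Nat.find h + 1) else 0

lemma exitCode_mem_seqSet (x : X) : exitCode D x ∈ SeqSet := by
  unfold exitCode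
  split_ifs
  exacts [one_div_succ_mem_seqSet _, zero_mem_seqSet]

lemma exitCode_eq_zero_iff {x : X} : exitCode D x = 0 ↔ x ∈ ⋂ n, D n := by
  unfold exitCode
  split_ifs with h
  · have : (1 : ℝ) / (Nat.find h + 1) ≠ 0 := by positivity
    simpa only [this, false_iff, mem_iInter, not_forall] using h
  · simpa [mem_iInter] using h

lemma exitCode_eq_of_first_exit {x : X} {m : ℕ} (hm : x ∉ D m) (hlt : ∀ i < m, x ∈ D i) :
    exitCode D x = 1 / (m + 1) := by
  have h : ∃ n, x ∉ D n := ⟨m, hm⟩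
  rw [exitCode, dif_pos h, (Nat.find_eq_iff h).2 ⟨hm, fun i hi => not_not_intro (hlt i hi)⟩]

lemma exitCode_le {x : X} {n : ℕ} (hlt : ∀ i < n, x ∈ D i) : exitCode D x ≤ 1 / (n + 1) := by
  unfold exitCode
  split_ifs with h
  · have : n ≤ Nat.find h := (Nat.le_find_iff h n).2 fun i hi => not_not_intro (hlt i hi)
    gcongr
  · positivity

lemma isOpen_iInter_lt [TopologicalSpace X] (hD : ∀ n, IsOpen (D n)) (m : ℕ) :
    IsOpen {x | ∀ i < m, x ∈ D i} := by
  convert (finite_lt_nat m).isOpen_biInter fun i _ => hD i using 1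
  ext
  simp

/-- Off `⋂ n, D n` the code is locally constant; on it, the code is small near `x` because
points near `x` stay in `D 0, …, D n`. -/
lemma continuous_exitCode [TopologicalSpace X] (hD : ∀ n, IsClopen (D n)) :
    Continuous (exitCode D) := by
  refine continuous_iff_continuousAt.2 fun x => ?_
  by_cases hx : ∃ n, x ∉ D n
  · set m := Nat.find hx
    have hW : IsOpen ((D m)ᶜ ∩ {y | ∀ i < m, y ∈ D i}) :=
      (hD m).isClosed.isOpen_compl.inter (isOpen_iInter_lt (fun i => (hD i).isOpen) m)
    have hxW : x ∈ (D m)ᶜ ∩ {y | ∀ i < m, y ∈ D i} :=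
      ⟨Nat.find_spec hx, fun i hi => not_not.1 (Nat.find_min hx hi)⟩
    refine continuousAt_const.congr (f := fun _ => 1 / (m + 1 : ℝ)) ?_
    filter_upwards [hW.mem_nhds hxW] with y hy
    exact (exitCode_eq_of_first_exit hy.1 hy.2).symm
  · have hx0 : exitCode D x = 0 := exitCode_eq_zero_iff.2 (by simpa [mem_iInter] using hx)
    rw [ContinuousAt, hx0, Metric.tendsto_nhds]
    intro ε hε
    obtain ⟨n, hn⟩ := exists_nat_one_div_lt hε
    have hxn : x ∈ {y | ∀ i < n, y ∈ D i} := fun i _ => not_not.1 (not_exists.1 hx i)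
    filter_upwards [(isOpen_iInter_lt (fun i => (hD i).isOpen) n).mem_nhds hxn] with y hy
    rw [Real.dist_0_eq_abs, abs_of_nonneg (seqSet_subset_unitInterval (exitCode_mem_seqSet y)).1]
    exact (exitCode_le hy).trans_lt hn

end ExitCode

namespace ZeroDimSpace

variable {X : Type*} [TopologicalSpace X]

lemma exists_isClopen_between_s11 (h0 : ZeroDimSpace X) {K U : Set X} (hK : IsCompact K)
    (hU : IsOpen U) (hKU : K ⊆ U) : ∃ C, IsClopen C ∧ K ⊆ C ∧ C ⊆ U := by
  obtain ⟨B, hB, hBc⟩ := h0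
  choose! V hVB hxV hVU using fun x (hx : x ∈ U) => hB.exists_subset_of_mem_open hx hU
  obtain ⟨t, ht⟩ := hK.elim_finite_subcover (fun x : K => V x)
    (fun x => (hBc _ (hVB x (hKU x.2))).isOpen) fun x hx => mem_iUnion.2 ⟨⟨x, hx⟩, hxV x (hKU hx)⟩
  exact ⟨⋃ i ∈ t, V i, isClopen_biUnion_finset fun i _ => hBc _ (hVB i (hKU i.2)), ht,
    iUnion₂_subset fun i _ => hVU i (hKU i.2)⟩

lemma exists_isClopen_iInter_eq [CompactSpace X] [PerfectlyNormalSpace X] (h0 : ZeroDimSpace X)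
    {F : Set X} (hF : IsClosed F) : ∃ C : ℕ → Set X, (∀ n, IsClopen (C n)) ∧ ⋂ n, C n = F := by
  obtain ⟨U, hU, rfl⟩ := isGδ_iff_eq_iInter_nat.1 hF.isGδ
  choose C hC hUC hCU using fun n =>
    h0.exists_isClopen_between_s11 hF.isCompact (hU n) (iInter_subset U n)
  exact ⟨C, hC, (iInter_mono hCU).antisymm (subset_iInter hUC)⟩

lemma exists_continuous_seqSet_zero_iff [CompactSpace X] [PerfectlyNormalSpace X]
    (h0 : ZeroDimSpace X) {F : Set X} (hF : IsClosed F) :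
    ∃ f : X → ℝ, (Continuous f ∧ ∀ x, f x ∈ SeqSet) ∧ ∀ x, f x = 0 ↔ x ∈ F := by
  obtain ⟨D, hD, rfl⟩ := h0.exists_isClopen_iInter_eq hF
  exact ⟨exitCode D, ⟨continuous_exitCode hD, exitCode_mem_seqSet⟩, fun _ => exitCode_eq_zero_iff⟩

lemma exists_isClopen_separating [SecondCountableTopology X] [T1Space X] (h0 : ZeroDimSpace X) :
    ∃ B : ℕ → Set X, (∀ n, IsClopen (B n)) ∧ ∀ x y, x ≠ y → ∃ n, x ∈ B n ∧ y ∉ B n := by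
  obtain ⟨b, hb, hbc⟩ := h0
  obtain ⟨s, hsb, hs, hsB⟩ := hb.exists_countable
  obtain ⟨B, hB⟩ := (hs.insert ∅).exists_eq_range (insert_nonempty _ _)
  refine ⟨B, fun n => ?_, fun x y hxy => ?_⟩
  · rcases (hB ▸ mem_range_self n : B n ∈ insert ∅ s) with h | h
    · exact h ▸ isClopen_empty
    · exact hbc _ (hsb h)
  · obtain ⟨V, hVs, hxV, hVy⟩ :=
      hsB.exists_subset_of_mem_open (hxy : x ∈ ({y}ᶜ : Set X)) isOpen_compl_singleton
    obtain ⟨n, rfl⟩ : V ∈ range B := hB ▸ mem_insert_of_mem _ hVs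
    exact ⟨n, hxV, fun hy => hVy hy rfl⟩

end ZeroDimSpace

def coordIndex : (ℕ × ℕ) ⊕ ℕ → ℕ
  | .inl (k, l) => 2 ^ k * 3 ^ l
  | .inr n => 5 * n

lemma coordIndex_injective : Function.Injective coordIndex := by
  have five_not_dvd (k l n : ℕ) : 2 ^ k * 3 ^ l ≠ 5 * n := fun h => by
    have hcop : Nat.Coprime 5 (2 ^ k * 3 ^ l) :=
      (Nat.Coprime.mul_left (.pow_left _ (by norm_num)) (.pow_left _ (by norm_num))).symm
    exact absurd (hcop.eq_one_of_dvd (h ▸ dvd_mul_right 5 n)) (by norm_num)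
  rintro (⟨k, l⟩ | n) (⟨k', l'⟩ | n') h <;> simp only [coordIndex] at h
  · have h2 := congrArg (·.factorization 2) h
    have h3 := congrArg (·.factorization 3) h
    obtain ⟨rfl, rfl⟩ : k = k' ∧ l = l' := by
      simpa [Nat.factorization_mul, Nat.prime_two, Nat.prime_three] using And.intro h2 h3
    rfl
  · exact absurd h (five_not_dvd k l n')
  · exact absurd h.symm (five_not_dvd k' l' n)
  · rw [show n = n' by omega]

/-- For each `Fσδ` set `A` in a compact zero-dimensional metrizable space `X` there is an
embedding `h : X → S^ℕ ⊆ I^ℕ` with `A = h⁻¹(H)`. -/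
theorem stmt_11 (X : Type*) [TopologicalSpace X] [CompactSpace X] [MetrizableSpace X]
    (h0 : ZeroDimSpace X) (A : Set X) (hA : IsFσδ A) :
    ∃ h : X → HilbertCube, IsEmbedding h ∧ (∀ (x : X) (n : ℕ), (h x n : ℝ) ∈ SeqSet) ∧
      A = h ⁻¹' Hset := by
  obtain ⟨F, hF, rfl⟩ := hA
  choose f hf hf0 using fun k l => h0.exists_continuous_seqSet_zero_iff (hF k l)
  obtain ⟨B, hB, hsep⟩ := h0.exists_isClopen_separating
  set g : ℕ → X → ℝ :=
    Function.extend coordIndex (Sum.elim (fun p => f p.1 p.2) fun n => (B n).indicator 1) 0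
  have hg : ∀ m, Continuous (g m) ∧ ∀ x, g m x ∈ SeqSet := by
    refine Function.extend_mem (s := {φ | Continuous φ ∧ ∀ x, φ x ∈ SeqSet}) ?_
      fun _ => ⟨continuous_const, fun _ => zero_mem_seqSet⟩
    rintro (⟨k, l⟩ | n)
    · exact hf k l
    · refine ⟨(hB n).continuous_indicator continuous_const, fun x => ?_⟩
      by_cases hx : x ∈ B n <;> simp [hx, one_mem_seqSet, zero_mem_seqSet]
  have hgF (k l : ℕ) : g (2 ^ k * 3 ^ l) = f k l :=
    coordIndex_injective.extend_apply _ _ (.inl (k, l))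
  have hgB (n : ℕ) : g (5 * n) = (B n).indicator 1 :=
    coordIndex_injective.extend_apply _ _ (.inr n)
  set h : X → HilbertCube := fun x m => ⟨g m x, seqSet_subset_unitInterval ((hg m).2 x)⟩
  have hinj : h.Injective := fun x y hxy => by
    by_contra hne
    obtain ⟨n, hx, hy⟩ := hsep x y hne
    have := congrArg (fun z : HilbertCube => (z (5 * n) : ℝ)) hxy
    simp [h, hgB, hx, hy] at this
  refine ⟨h, ((continuous_pi fun m => (hg m).1.subtype_mk _).isClosedEmbedding hinj).isEmbedding,
    fun x m => (hg m).2 x, ?_⟩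
  ext x
  simp only [mem_iInter, mem_iUnion, mem_preimage, Hset, mem_ofPred_eq, h, hgF, hf0]
end
end
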